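/- arXiv:2209.11416 — 10 statements merged into one kernel-verified Lean document; each statement's English description precedes it below -/
import Mathlib

section
/- If π is nonzero and irreducible, then every nonzero vector f ∈ ℓ²(ℕ², H) is cyclic for C, i.e., the closure of {Xf : X ∈ C} is all of ℓ²(ℕ², H); consequently the identity representation of C on ℓ²(ℕ², H) is irreducible. -/
open scoped ENNReal

noncomputable section

section Aux

variable {H : Type*} [NormedAddCommGroup H] [InnerProductSpace ℂ H] [CompleteSpace H]

set_option linter.unusedSectionVars false

lemma mysingle_sub (s : ℕ × ℕ) (x y : H) :
    (lp.single 2 s (x - y) : lp (fun _ : ℕ × ℕ => H) 2) = lp.single 2 s x - lp.single 2 s y := by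
  apply lp.ext; funext j
  by_cases hj : j = s
  · subst hj; simp [lp.single_apply_self, lp.coeFn_sub]
  · simp [lp.single_apply_ne _ _ _ hj, lp.coeFn_sub]

lemma mynorm_single (s : ℕ × ℕ) (x : H) :
    ‖(lp.single 2 s x : lp (fun _ : ℕ × ℕ => H) 2)‖ = ‖x‖ :=
  lp.norm_single (E := fun _ : ℕ × ℕ => H) (p := 2) (by norm_num) s x

variable (V : ℕ × ℕ → (lp (fun _ : ℕ × ℕ => H) 2 →L[ℂ] lp (fun _ : ℕ × ℕ => H) 2))

lemma myV_single_le
    (hV : ∀ (t : ℕ × ℕ) (f : lp (fun _ : ℕ × ℕ => H) 2) (s : ℕ × ℕ), (V t f) s = f (s + t))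
    {u w : ℕ × ℕ} (hle : u ≤ w) (x : H) :
    V u (lp.single 2 w x) = (lp.single 2 (w - u) x : lp (fun _ : ℕ × ℕ => H) 2) := by
  apply lp.ext; funext s
  rw [hV]
  obtain ⟨u1, u2⟩ := u; obtain ⟨w1, w2⟩ := w; obtain ⟨s1, s2⟩ := s
  rw [Prod.mk_le_mk] at hle
  by_cases hs : ((s1, s2) : ℕ × ℕ) = ((w1, w2) : ℕ × ℕ) - ((u1, u2) : ℕ × ℕ)
  · rw [hs, lp.single_apply_self]
    have : ((w1, w2) : ℕ × ℕ) - ((u1, u2) : ℕ × ℕ) + ((u1, u2) : ℕ × ℕ) = ((w1, w2) : ℕ × ℕ) := by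
      simp [Prod.ext_iff]; constructor <;> omega
    rw [this, lp.single_apply_self]
  · rw [lp.single_apply_ne _ _ _ hs, lp.single_apply_ne]
    simp only [Prod.mk_sub_mk, Prod.mk_add_mk, Ne, Prod.mk.injEq, not_and] at *
    intro h1 h2
    exact hs (by omega) (by omega)

lemma myV_single_nle
    (hV : ∀ (t : ℕ × ℕ) (f : lp (fun _ : ℕ × ℕ => H) 2) (s : ℕ × ℕ), (V t f) s = f (s + t))
    {u w : ℕ × ℕ} (hle : ¬ u ≤ w) (x : H) :
    V u (lp.single 2 w x) = 0 := by
  apply lp.ext; funext s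
  rw [hV]
  have hne : s + u ≠ w := by rintro rfl; exact hle le_add_self
  rw [lp.single_apply_ne _ _ _ hne, lp.coeFn_zero, Pi.zero_apply]

lemma myVdag_single
    (hV : ∀ (t : ℕ × ℕ) (f : lp (fun _ : ℕ × ℕ => H) 2) (s : ℕ × ℕ), (V t f) s = f (s + t))
    (s : ℕ × ℕ) (x : H) :
    (star (V s)) (lp.single 2 0 x) = (lp.single 2 s x : lp (fun _ : ℕ × ℕ => H) 2) := by
  rw [ContinuousLinearMap.star_eq_adjoint]
  apply ext_inner_right ℂ
  intro g
  rw [ContinuousLinearMap.adjoint_inner_left, lp.inner_single_left, lp.inner_single_left,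
    hV, zero_add]

lemma myQ_apply_le
    (hV : ∀ (t : ℕ × ℕ) (f : lp (fun _ : ℕ × ℕ => H) 2) (s : ℕ × ℕ), (V t f) s = f (s + t))
    {u w : ℕ × ℕ} (hle : u ≤ w) (f : lp (fun _ : ℕ × ℕ => H) 2) :
    ((star (V u) * V u) f) w = f w := by
  apply ext_inner_left ℂ
  intro x
  have hsub : w - u + u = w := by
    obtain ⟨u1, u2⟩ := u; obtain ⟨w1, w2⟩ := w
    rw [Prod.mk_le_mk] at hle
    simp [Prod.ext_iff]; constructor <;> omega
  rw [ContinuousLinearMap.mul_apply]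
  calc (inner ℂ x (((star (V u)) (V u f)) w) : ℂ)
      = inner ℂ (lp.single 2 w x : lp (fun _ : ℕ × ℕ => H) 2) ((star (V u)) (V u f)) :=
        by exact (lp.inner_single_left (G := fun _ : ℕ × ℕ => H) w x ((star (V u)) ((V u) f))).symm
    _ = inner ℂ (V u (lp.single 2 w x)) (V u f) := by
        rw [ContinuousLinearMap.star_eq_adjoint, ContinuousLinearMap.adjoint_inner_right]
    _ = inner ℂ (lp.single 2 (w - u) x : lp (fun _ : ℕ × ℕ => H) 2) (V u f) := by
        rw [myV_single_le V hV hle]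
    _ = inner ℂ x (f w) := by rw [lp.inner_single_left, hV, hsub]

lemma myQ_apply_nle
    (hV : ∀ (t : ℕ × ℕ) (f : lp (fun _ : ℕ × ℕ => H) 2) (s : ℕ × ℕ), (V t f) s = f (s + t))
    {u w : ℕ × ℕ} (hle : ¬ u ≤ w) (f : lp (fun _ : ℕ × ℕ => H) 2) :
    ((star (V u) * V u) f) w = 0 := by
  apply ext_inner_left ℂ
  intro x
  rw [ContinuousLinearMap.mul_apply]
  calc (inner ℂ x (((star (V u)) (V u f)) w) : ℂ)
      = inner ℂ (lp.single 2 w x : lp (fun _ : ℕ × ℕ => H) 2) ((star (V u)) (V u f)) :=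
        by exact (lp.inner_single_left (G := fun _ : ℕ × ℕ => H) w x ((star (V u)) ((V u) f))).symm
    _ = inner ℂ (V u (lp.single 2 w x)) (V u f) := by
        rw [ContinuousLinearMap.star_eq_adjoint, ContinuousLinearMap.adjoint_inner_right]
    _ = 0 := by rw [myV_single_nle V hV hle, inner_zero_left]
    _ = inner ℂ x (0 : H) := (inner_zero_right x).symm

lemma myP0_apply
    (hV : ∀ (t : ℕ × ℕ) (f : lp (fun _ : ℕ × ℕ => H) 2) (s : ℕ × ℕ), (V t f) s = f (s + t))
    (f : lp (fun _ : ℕ × ℕ => H) 2) :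
    (1 - star (V (1,0)) * V (1,0) - star (V (0,1)) * V (0,1) + star (V (1,1)) * V (1,1)) f
      = lp.single 2 0 (f 0) := by
  apply lp.ext; funext w
  have hcoe : ((1 - star (V (1,0)) * V (1,0) - star (V (0,1)) * V (0,1)
        + star (V (1,1)) * V (1,1)) f) w
      = f w - ((star (V (1,0)) * V (1,0)) f) w - ((star (V (0,1)) * V (0,1)) f) w
        + ((star (V (1,1)) * V (1,1)) f) w := by
    simp only [ContinuousLinearMap.add_apply, ContinuousLinearMap.sub_apply,
      ContinuousLinearMap.one_apply, lp.coeFn_add, lp.coeFn_sub, Pi.add_apply, Pi.sub_apply]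
  rw [hcoe]
  obtain ⟨w1, w2⟩ := w
  have q10 : ((star (V (1,0)) * V (1,0)) f) (w1, w2) = if 1 ≤ w1 then f (w1, w2) else 0 := by
    by_cases h : 1 ≤ w1
    · rw [if_pos h]; exact myQ_apply_le V hV (by rw [Prod.mk_le_mk]; omega) f
    · rw [if_neg h]; exact myQ_apply_nle V hV (by rw [Prod.mk_le_mk]; omega) f
  have q01 : ((star (V (0,1)) * V (0,1)) f) (w1, w2) = if 1 ≤ w2 then f (w1, w2) else 0 := by
    by_cases h : 1 ≤ w2
    · rw [if_pos h]; exact myQ_apply_le V hV (by rw [Prod.mk_le_mk]; omega) f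
    · rw [if_neg h]; exact myQ_apply_nle V hV (by rw [Prod.mk_le_mk]; omega) f
  have q11 : ((star (V (1,1)) * V (1,1)) f) (w1, w2)
      = if 1 ≤ w1 ∧ 1 ≤ w2 then f (w1, w2) else 0 := by
    by_cases h : 1 ≤ w1 ∧ 1 ≤ w2
    · rw [if_pos h]; exact myQ_apply_le V hV (by rw [Prod.mk_le_mk]; omega) f
    · rw [if_neg h]; exact myQ_apply_nle V hV (by rw [Prod.mk_le_mk]; omega) f
  rw [q10, q01, q11]
  by_cases hw : ((w1, w2) : ℕ × ℕ) = 0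
  · rw [hw, lp.single_apply_self]
    have h1 : w1 = 0 ∧ w2 = 0 := by simpa [Prod.ext_iff] using hw
    rw [if_neg (by omega), if_neg (by omega), if_neg (by omega)]
    abel
  · rw [lp.single_apply_ne _ _ _ hw]
    have h1 : ¬ (w1 = 0 ∧ w2 = 0) := by
      intro ⟨ha, hb⟩; exact hw (by simp [Prod.ext_iff, ha, hb])
    by_cases ha : 1 ≤ w1 <;> by_cases hb : 1 ≤ w2
    · rw [if_pos ha, if_pos hb, if_pos ⟨ha, hb⟩]; abel
    · rw [if_pos ha, if_neg hb, if_neg (by omega)]; abel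
    · rw [if_neg ha, if_pos hb, if_neg (by omega)]; abel
    · omega


end Aux

set_option maxHeartbeats 1000000

/-- If `π` is nonzero and irreducible, then every nonzero vector of
`ℓ²(ℕ², H)` is cyclic for the `C*`-algebra `C` generated by `{π̃(a)} ∪ {V_t}`, and
consequently the identity representation of `C` on `ℓ²(ℕ², H)` is irreducible. -/
theorem stmt1
    {A : Type*} [NonUnitalNormedRing A] [StarRing A] [CStarRing A]
    [NormedSpace ℂ A] [IsScalarTower ℂ A A] [SMulCommClass ℂ A A] [StarModule ℂ A]
    [CompleteSpace A]
    {H : Type*} [NormedAddCommGroup H] [InnerProductSpace ℂ H] [CompleteSpace H]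
    (α : ℕ × ℕ → (A ≃⋆ₐ[ℂ] A))
    (hα0 : ∀ a : A, α 0 a = a)
    (hαadd : ∀ s t : ℕ × ℕ, ∀ a : A, α (s + t) a = α s (α t a))
    (π : A →⋆ₙₐ[ℂ] (H →L[ℂ] H))
    (hπnd : Dense (↑(Submodule.span ℂ {x : H | ∃ (a : A) (h : H), π a h = x}) : Set H))
    -- `π` is nonzero:
    (hπne : π ≠ 0)
    -- `π` is irreducible (only trivial closed invariant subspaces):
    (hπirr : ∀ K : Submodule ℂ H, IsClosed (K : Set H) →
      (∀ (a : A), ∀ h ∈ K, π a h ∈ K) → K = ⊥ ∨ K = ⊤)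
    (πt : A → (lp (fun _ : ℕ × ℕ => H) 2 →L[ℂ] lp (fun _ : ℕ × ℕ => H) 2))
    (V : ℕ × ℕ → (lp (fun _ : ℕ × ℕ => H) 2 →L[ℂ] lp (fun _ : ℕ × ℕ => H) 2))
    (hπt : ∀ (a : A) (f : lp (fun _ : ℕ × ℕ => H) 2) (s : ℕ × ℕ),
      (πt a f) s = π (α s a) (f s))
    (hV : ∀ (t : ℕ × ℕ) (f : lp (fun _ : ℕ × ℕ => H) 2) (s : ℕ × ℕ),
      (V t f) s = f (s + t))
    -- `C` is the `C*`-subalgebra of `B(ℓ²(ℕ², H))` generated by the `π̃(a)` and the `V_t`: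
    (C : StarSubalgebra ℂ (lp (fun _ : ℕ × ℕ => H) 2 →L[ℂ] lp (fun _ : ℕ × ℕ => H) 2))
    (hC : C = (StarAlgebra.adjoin ℂ (Set.range πt ∪ Set.range V)).topologicalClosure) :
    -- every nonzero vector is cyclic for `C`:
    (∀ f : lp (fun _ : ℕ × ℕ => H) 2, f ≠ 0 →
      closure {g : lp (fun _ : ℕ × ℕ => H) 2 | ∃ X ∈ C, X f = g} = Set.univ) ∧
    -- consequently, the identity representation of `C` is irreducible:
    (∀ K : Submodule ℂ (lp (fun _ : ℕ × ℕ => H) 2), IsClosed (K : Set (lp (fun _ : ℕ × ℕ => H) 2)) →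
      (∀ X ∈ C, ∀ f ∈ K, X f ∈ K) → K = ⊥ ∨ K = ⊤) := by
  
  -- membership of generators
  have hVmem : ∀ t : ℕ × ℕ, V t ∈ C := by
    intro t
    rw [hC]
    exact StarSubalgebra.le_topologicalClosure _
      (StarAlgebra.subset_adjoin ℂ _ (Or.inr ⟨t, rfl⟩))
  have hπtmem : ∀ a : A, πt a ∈ C := by
    intro a
    rw [hC]
    exact StarSubalgebra.le_topologicalClosure _
      (StarAlgebra.subset_adjoin ℂ _ (Or.inl ⟨a, rfl⟩))
  have hP0mem : (1 - star (V (1,0)) * V (1,0) - star (V (0,1)) * V (0,1)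
      + star (V (1,1)) * V (1,1)) ∈ C :=
    add_mem (sub_mem (sub_mem (one_mem C) (mul_mem (star_mem (hVmem _)) (hVmem _)))
      (mul_mem (star_mem (hVmem _)) (hVmem _))) (mul_mem (star_mem (hVmem _)) (hVmem _))
  -- irreducibility gives cyclicity of every nonzero vector for π
  have hcyc : ∀ h₀ : H, h₀ ≠ 0 → Dense {y : H | ∃ b : A, π b h₀ = y} := by
    intro h₀ hne
    set φ : A →ₗ[ℂ] H :=
      { toFun := fun b => π b h₀
        map_add' := by
          intro x y
          show π (x + y) h₀ = π x h₀ + π y h₀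
          rw [map_add, ContinuousLinearMap.add_apply]
        map_smul' := by
          intro c x
          show π (c • x) h₀ = c • π x h₀
          rw [map_smul, ContinuousLinearMap.smul_apply] } with hφ
    set R : Submodule ℂ H := LinearMap.range φ with hR
    set K : Submodule ℂ H := R.topologicalClosure with hK
    have hKinv : ∀ (a : A), ∀ h ∈ K, π a h ∈ K := by
      intro a h hh
      have hmap : (π a) '' (R : Set H) ⊆ (R : Set H) := by
        rintro _ ⟨_, ⟨b, rfl⟩, rfl⟩
        exact ⟨a * b, by simp [hφ, map_mul, ContinuousLinearMap.mul_apply]⟩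
      have h1 : h ∈ closure (R : Set H) := by
        rw [← Submodule.topologicalClosure_coe]; exact hh
      have h2 : π a h ∈ closure ((π a) '' (R : Set H)) :=
        image_closure_subset_closure_image (π a).continuous ⟨h, h1, rfl⟩
      have h3 : π a h ∈ closure (R : Set H) := closure_mono hmap h2
      rw [← Submodule.topologicalClosure_coe] at h3; exact h3
    rcases hπirr K R.isClosed_topologicalClosure hKinv with hbot | htop
    · exfalso
      have hall : ∀ b : A, π b h₀ = 0 := by
        intro b
        have : φ b ∈ K := R.le_topologicalClosure ⟨b, rfl⟩
        rw [hbot, Submodule.mem_bot] at this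
        exact this
      set K₀ : Submodule ℂ H :=
        { carrier := {h : H | ∀ b : A, π b h = 0}
          zero_mem' := fun b => map_zero _
          add_mem' := by intro x y hx hy b; rw [map_add, hx b, hy b, add_zero]
          smul_mem' := by intro c x hx b; rw [map_smul, hx b, smul_zero] } with hK₀
      have hK₀closed : IsClosed (K₀ : Set H) := by
        have : (K₀ : Set H) = ⋂ b : A, (fun h => π b h) ⁻¹' {0} := by
          ext h; simp [hK₀, Set.mem_iInter]
        rw [this]
        exact isClosed_iInter fun b => (isClosed_singleton).preimage (π b).continuous
      have hK₀inv : ∀ (a : A), ∀ h ∈ K₀, π a h ∈ K₀ := by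
        intro a h hh b
        rw [← ContinuousLinearMap.mul_apply, ← map_mul]
        exact hh (b * a)
      rcases hπirr K₀ hK₀closed hK₀inv with h0bot | h0top
      · have : h₀ ∈ K₀ := hall
        rw [h0bot, Submodule.mem_bot] at this
        exact hne this
      · apply hπne
        ext a h
        have : h ∈ K₀ := h0top.symm ▸ Submodule.mem_top
        simpa using this a
    · have hset : {y : H | ∃ b : A, π b h₀ = y} = (R : Set H) := by
        ext y; constructor
        · rintro ⟨b, hb⟩; exact ⟨b, hb⟩
        · rintro ⟨b, hb⟩; exact ⟨b, hb⟩
      rw [hset, dense_iff_closure_eq, ← Submodule.topologicalClosure_coe, ← hK, htop,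
        Submodule.top_coe]
  -- the key formula
  have hkey : ∀ (f : lp (fun _ : ℕ × ℕ => H) 2) (s t : ℕ × ℕ) (b : A),
      ∃ X ∈ C, X f = lp.single 2 s (π b (f t)) := by
    intro f s t b
    set a : A := (α s).symm b with ha
    refine ⟨πt a * (star (V s) * ((1 - star (V (1,0)) * V (1,0) - star (V (0,1)) * V (0,1)
      + star (V (1,1)) * V (1,1)) * V t)), mul_mem (hπtmem a) (mul_mem (star_mem (hVmem s))
      (mul_mem hP0mem (hVmem t))), ?_⟩
    have h2 : (1 - star (V (1,0)) * V (1,0) - star (V (0,1)) * V (0,1)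
        + star (V (1,1)) * V (1,1)) (V t f) = lp.single 2 0 (f t) := by
      rw [myP0_apply V hV (V t f), hV, zero_add]
    have h3 : star (V s) ((lp.single 2 0 (f t) : lp (fun _ : ℕ × ℕ => H) 2))
        = lp.single 2 s (f t) := myVdag_single V hV s (f t)
    have h4 : πt a ((lp.single 2 s (f t) : lp (fun _ : ℕ × ℕ => H) 2))
        = lp.single 2 s (π (α s a) (f t)) := by
      apply lp.ext; funext w
      rw [hπt]
      by_cases hw : w = s
      · subst hw; rw [lp.single_apply_self, lp.single_apply_self]
      · rw [lp.single_apply_ne _ _ _ hw, lp.single_apply_ne _ _ _ hw, map_zero]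
    have hab : α s a = b := (α s).apply_symm_apply b
    calc (πt a * (star (V s) * ((1 - star (V (1,0)) * V (1,0) - star (V (0,1)) * V (0,1)
        + star (V (1,1)) * V (1,1)) * V t))) f
        = πt a (star (V s) ((1 - star (V (1,0)) * V (1,0) - star (V (0,1)) * V (0,1)
          + star (V (1,1)) * V (1,1)) (V t f))) := by
            simp only [ContinuousLinearMap.mul_apply]
      _ = lp.single 2 s (π b (f t)) := by rw [h2, h3, h4, hab]
  -- main cyclicity statement
  have main : ∀ f : lp (fun _ : ℕ × ℕ => H) 2, f ≠ 0 →
      closure {g : lp (fun _ : ℕ × ℕ => H) 2 | ∃ X ∈ C, X f = g} = Set.univ := by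
    intro f hf
    obtain ⟨t, ht⟩ : ∃ t, f t ≠ 0 := by
      by_contra h
      push_neg at h
      exact hf (lp.ext (funext fun t => by rw [h t, lp.coeFn_zero, Pi.zero_apply]))
    set S : Set (lp (fun _ : ℕ × ℕ => H) 2) := {g | ∃ X ∈ C, X f = g} with hS
    have hsingle : ∀ (s : ℕ × ℕ) (x : H), (lp.single 2 s x : lp (fun _ : ℕ × ℕ => H) 2)
        ∈ closure S := by
      intro s x
      have hD : Dense {y : H | ∃ b : A, π b (f t) = y} := hcyc _ ht
      rw [Metric.mem_closure_iff]
      intro ε hε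
      obtain ⟨y, ⟨b, hb⟩, hy⟩ := Metric.mem_closure_iff.mp (hD x) ε hε
      obtain ⟨X, hXC, hXf⟩ := hkey f s t b
      refine ⟨lp.single 2 s y, ⟨X, hXC, by rw [hXf, hb]⟩, ?_⟩
      rw [dist_eq_norm, ← mysingle_sub, mynorm_single, ← dist_eq_norm]
      exact hy
    set Sm : Submodule ℂ (lp (fun _ : ℕ × ℕ => H) 2) :=
      { carrier := S
        zero_mem' := ⟨0, zero_mem C, ContinuousLinearMap.zero_apply f⟩
        add_mem' := by
          rintro x y ⟨X, hX, rfl⟩ ⟨Y, hY, rfl⟩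
          exact ⟨X + Y, add_mem hX hY, ContinuousLinearMap.add_apply X Y f⟩
        smul_mem' := by
          rintro c x ⟨X, hX, rfl⟩
          exact ⟨c • X, SMulMemClass.smul_mem c hX, ContinuousLinearMap.smul_apply X c f⟩ } with hSm
    have hST : closure S = (Sm.topologicalClosure : Set (lp (fun _ : ℕ × ℕ => H) 2)) :=
      (Submodule.topologicalClosure_coe Sm).symm
    have htop : Sm.topologicalClosure = ⊤ := by
      rw [Submodule.eq_top_iff']
      intro g
      have hsum : HasSum (fun s : ℕ × ℕ => (lp.single 2 s (g s) : lp (fun _ : ℕ × ℕ => H) 2)) g :=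
        lp.hasSum_single (by norm_num) g
      refine Sm.isClosed_topologicalClosure.mem_of_tendsto hsum
        (Filter.Eventually.of_forall fun F => sum_mem fun s _ => ?_)
      have hs := hsingle s (g s)
      rw [hST] at hs
      exact hs
    rw [hST, htop, Submodule.top_coe]
  refine ⟨main, ?_⟩
  intro K hKc hKinv
  by_cases hK : K = ⊥
  · exact Or.inl hK
  · right
    obtain ⟨f, hfK, hf⟩ := Submodule.exists_mem_ne_zero_of_ne_bot hK
    have hsub : {g : lp (fun _ : ℕ × ℕ => H) 2 | ∃ X ∈ C, X f = g} ⊆ (K : Set _) := by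
      rintro g ⟨X, hX, rfl⟩
      exact hKinv X hX f hfK
    rw [Submodule.eq_top_iff']
    intro g
    have hg : g ∈ closure {g : lp (fun _ : ℕ × ℕ => H) 2 | ∃ X ∈ C, X f = g} := by
      rw [main f hf]; trivial
    have hcl : closure {g : lp (fun _ : ℕ × ℕ => H) 2 | ∃ X ∈ C, X f = g} ⊆ (K : Set _) :=
      closure_minimal hsub hKc
    exact hcl hg
end
end

section
/- For every a ∈ A and (m,n), (x,y) ∈ ℕ², the operator ξ^{(x,y)}_{(m,n)}(a) − ξ^{(x,y+1)}_{(m,n+1)}(α_{(0,1)}(a)) on ℓ²(ℕ², H) sends e_{(x,y)} ⊗ h to e_{(m,n)} ⊗ π(a)h for every h ∈ H and annihilates e_{(r,s)} ⊗ h whenever (r,s) ≠ (x,y); that is, it equals θ_{(m,n),(x,y)} ⊗ π(a), where θ_{(m,n),(x,y)} is the rank-one operator g ↦ ⟨g, e_{(x,y)}⟩ e_{(m,n)} on ℓ²(ℕ²). -/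
open scoped ENNReal

noncomputable section

/-- For `a ∈ A` and `(m,n), (x,y) ∈ ℕ²`, the operator
`ξ^{(x,y)}_{(m,n)}(a) − ξ^{(x,y+1)}_{(m,n+1)}(α_{(0,1)}(a))` equals the elementary tensor
`θ_{(m,n),(x,y)} ⊗ π(a)`, i.e. it maps `f` to `e_{(m,n)} ⊗ π(a)(f(x,y))`; in particular
it sends `e_{(x,y)} ⊗ h` to `e_{(m,n)} ⊗ π(a)h` and kills `e_{(r,s)} ⊗ h` for
`(r,s) ≠ (x,y)`. -/
theorem stmt2
    {A : Type*} [NonUnitalNormedRing A] [StarRing A] [CStarRing A]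
    [NormedSpace ℂ A] [IsScalarTower ℂ A A] [SMulCommClass ℂ A A] [StarModule ℂ A]
    [CompleteSpace A]
    {H : Type*} [NormedAddCommGroup H] [InnerProductSpace ℂ H] [CompleteSpace H]
    (α : ℕ × ℕ → (A ≃⋆ₐ[ℂ] A))
    (hα0 : ∀ a : A, α 0 a = a)
    (hαadd : ∀ s t : ℕ × ℕ, ∀ a : A, α (s + t) a = α s (α t a))
    (π : A →⋆ₙₐ[ℂ] (H →L[ℂ] H))
    (hπnd : Dense (↑(Submodule.span ℂ {x : H | ∃ (a : A) (h : H), π a h = x}) : Set H))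
    (πt : A → (lp (fun _ : ℕ × ℕ => H) 2 →L[ℂ] lp (fun _ : ℕ × ℕ => H) 2))
    (V : ℕ × ℕ → (lp (fun _ : ℕ × ℕ => H) 2 →L[ℂ] lp (fun _ : ℕ × ℕ => H) 2))
    (hπt : ∀ (a : A) (f : lp (fun _ : ℕ × ℕ => H) 2) (s : ℕ × ℕ),
      (πt a f) s = π (α s a) (f s))
    (hV : ∀ (t : ℕ × ℕ) (f : lp (fun _ : ℕ × ℕ => H) 2) (s : ℕ × ℕ),
      (V t f) s = f (s + t))
    -- the elements `ξ^{(x,y)}_{(m,n)}(a) := V_{(m,n)}* π̃(a) (1 − V_{(1,0)}* V_{(1,0)}) V_{(x,y)}`: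
    (ξ : A → ℕ × ℕ → ℕ × ℕ → (lp (fun _ : ℕ × ℕ => H) 2 →L[ℂ] lp (fun _ : ℕ × ℕ => H) 2))
    (hξ : ∀ (a : A) (u v : ℕ × ℕ), ξ a u v =
      ContinuousLinearMap.adjoint (V u) * πt a *
        (1 - ContinuousLinearMap.adjoint (V (1, 0)) * V (1, 0)) * V v)
    (a : A) (m n x y : ℕ) :
    -- the operator is `θ_{(m,n),(x,y)} ⊗ π(a)`:
    (∀ f : lp (fun _ : ℕ × ℕ => H) 2,
      (ξ a (m, n) (x, y) - ξ (α (0, 1) a) (m, n + 1) (x, y + 1)) f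
        = lp.single 2 (m, n) (π a (f (x, y)))) ∧
    -- it sends `e_{(x,y)} ⊗ h` to `e_{(m,n)} ⊗ π(a)h`:
    (∀ h : H,
      (ξ a (m, n) (x, y) - ξ (α (0, 1) a) (m, n + 1) (x, y + 1)) (lp.single 2 (x, y) h)
        = lp.single 2 (m, n) (π a h)) ∧
    -- and annihilates `e_{(r,s)} ⊗ h` whenever `(r,s) ≠ (x,y)`:
    (∀ (r s : ℕ) (h : H), (r, s) ≠ (x, y) →
      (ξ a (m, n) (x, y) - ξ (α (0, 1) a) (m, n + 1) (x, y + 1)) (lp.single 2 (r, s) h)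
        = 0) := by
  classical
  -- a convenient form of `lp.single_apply`
  have hsingle : ∀ (i j : ℕ × ℕ) (h : H),
      (lp.single 2 i h : lp (fun _ : ℕ × ℕ => H) 2) j = if j = i then h else 0 := by
    intro i j h
    by_cases hji : j = i
    · subst hji; rw [lp.single_apply_self, if_pos rfl]
    · rw [lp.single_apply_ne _ _ _ hji, if_neg hji]
  -- pointwise formula for the adjoint of `V u`
  have hadj : ∀ (u : ℕ × ℕ) (f : lp (fun _ : ℕ × ℕ => H) 2) (s : ℕ × ℕ),
      (ContinuousLinearMap.adjoint (V u) f) s = if u ≤ s then f (s - u) else 0 := by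
    intro u f s
    apply ext_inner_left ℂ
    intro h
    have h1 := lp.inner_single_left (𝕜 := ℂ) s h (ContinuousLinearMap.adjoint (V u) f)
    rw [ContinuousLinearMap.adjoint_inner_right] at h1
    rw [← h1]
    have hVs : V u (lp.single 2 s h)
        = if u ≤ s then lp.single 2 (s - u) h else 0 := by
      apply lp.ext
      funext t
      rw [hV]
      by_cases hus : u ≤ s
      · rw [if_pos hus]
        rw [hsingle, hsingle]
        obtain ⟨s1, s2⟩ := s; obtain ⟨u1, u2⟩ := u; obtain ⟨t1, t2⟩ := t
        rw [Prod.mk_le_mk] at hus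
        rw [Prod.mk_add_mk, Prod.mk_sub_mk]
        by_cases ht : (t1 + u1, t2 + u2) = (s1, s2)
        · rw [if_pos ht, if_pos (by rw [Prod.mk.injEq] at ht ⊢; omega)]
        · rw [if_neg ht, if_neg (by rw [Prod.mk.injEq] at ht ⊢; omega)]
      · rw [if_neg hus]
        rw [hsingle]
        have ht : t + u ≠ s := by
          intro hh
          exact hus (hh ▸ le_add_self)
        rw [if_neg ht]
        rfl
    rw [hVs]
    by_cases hus : u ≤ s
    · rw [if_pos hus, if_pos hus, lp.inner_single_left]
    · rw [if_neg hus, if_neg hus, inner_zero_left, inner_zero_right]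
  -- pointwise formula for `ξ b u v`
  have hxi : ∀ (b : A) (u v : ℕ × ℕ) (f : lp (fun _ : ℕ × ℕ => H) 2) (s : ℕ × ℕ),
      (ξ b u v) f s
        = if u ≤ s ∧ (s - u).1 = 0 then π (α (s - u) b) (f (s - u + v)) else 0 := by
    intro b u v f s
    rw [hξ]
    simp only [ContinuousLinearMap.mul_apply, ContinuousLinearMap.sub_apply,
      ContinuousLinearMap.one_apply]
    rw [hadj]
    by_cases hus : u ≤ s
    · rw [if_pos hus]
      rw [hπt]
      have hsub : ((V v f - ContinuousLinearMap.adjoint (V (1, 0)) (V (1, 0) (V v f))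
            : lp (fun _ : ℕ × ℕ => H) 2)) (s - u)
          = (V v f) (s - u)
            - (ContinuousLinearMap.adjoint (V (1, 0)) (V (1, 0) (V v f))) (s - u) := by
        rw [lp.coeFn_sub]; rfl
      rw [hsub, hadj]
      by_cases h10 : (1, 0) ≤ s - u
      · rw [if_pos h10]
        have hidx : ∀ w : ℕ × ℕ, (1, 0) ≤ w → w - (1, 0) + (1, 0) = w := by
          rintro ⟨c, d⟩ ⟨hc, hd⟩
          rw [Prod.mk_sub_mk, Prod.mk_add_mk, Prod.mk.injEq]
          omega
        rw [hV (1, 0) (V v f) (s - u - (1, 0)), hidx _ h10, sub_self, map_zero]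
        rw [if_neg (by
          rintro ⟨-, h0⟩
          rw [Prod.le_def] at h10
          omega)]
      · rw [if_neg h10, hV, sub_zero]
        rw [if_pos ⟨hus, by rw [Prod.le_def] at h10; omega⟩]
    · rw [if_neg hus, if_neg (fun hc => hus hc.1)]
  -- main computation
  have main : ∀ f : lp (fun _ : ℕ × ℕ => H) 2,
      (ξ a (m, n) (x, y) - ξ (α (0, 1) a) (m, n + 1) (x, y + 1)) f
        = lp.single 2 (m, n) (π a (f (x, y))) := by
    intro f
    apply lp.ext
    funext s
    have hsub : ((ξ a (m, n) (x, y) - ξ (α (0, 1) a) (m, n + 1) (x, y + 1)) f) s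
        = (ξ a (m, n) (x, y)) f s - (ξ (α (0, 1) a) (m, n + 1) (x, y + 1)) f s := by
      rw [ContinuousLinearMap.sub_apply, lp.coeFn_sub]; rfl
    rw [hsub, hxi, hxi, hsingle]
    obtain ⟨p, q⟩ := s
    simp only [Prod.mk_le_mk, Prod.mk_sub_mk, Prod.mk_add_mk]
    by_cases h1 : p = m
    · subst h1
      by_cases h2 : q = n
      · subst h2
        rw [if_pos ⟨⟨le_refl _, le_refl _⟩, Nat.sub_self p⟩,
          if_neg (by rintro ⟨⟨-, hq⟩, -⟩; omega), if_pos rfl, sub_zero]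
        rw [Nat.sub_self, Nat.sub_self]
        have h0 : ((0, 0) : ℕ × ℕ) = 0 := rfl
        rw [h0, hα0, Nat.zero_add, Nat.zero_add]
      · by_cases h3 : n ≤ q
        · -- q > n : both terms present and cancel
          have hq : n + 1 ≤ q := by omega
          rw [if_pos ⟨⟨le_refl p, h3⟩, Nat.sub_self p⟩,
            if_pos ⟨⟨le_refl p, hq⟩, Nat.sub_self p⟩,
            if_neg (by rw [Prod.mk.injEq]; omega)]
          have hα : α (p - p, q - n) a = α (p - p, q - (n + 1)) (α (0, 1) a) := by
            rw [← hαadd]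
            have he : ((p - p, q - (n + 1)) : ℕ × ℕ) + (0, 1) = (p - p, q - n) := by
              rw [Prod.mk_add_mk, Prod.mk.injEq]
              omega
            rw [he]
          have hidx : (p - p + x, q - n + y) = (p - p + x, q - (n + 1) + (y + 1)) := by
            rw [Prod.mk.injEq]; omega
          rw [hα, hidx, sub_self]
        · rw [if_neg (by rintro ⟨⟨-, hq⟩, -⟩; omega),
            if_neg (by rintro ⟨⟨-, hq⟩, -⟩; omega),
            if_neg (by rw [Prod.mk.injEq]; omega), sub_zero]
    · rw [if_neg (by rintro ⟨⟨hp, -⟩, h0⟩; omega),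
        if_neg (by rintro ⟨⟨hp, -⟩, h0⟩; omega),
        if_neg (by rw [Prod.mk.injEq]; omega), sub_zero]
  refine ⟨main, ?_, ?_⟩
  · intro h
    rw [main, hsingle, if_pos rfl]
  · intro r s h hrs
    rw [main]
    have hz : (lp.single 2 (r, s) h : lp (fun _ : ℕ × ℕ => H) 2) (x, y) = 0 := by
      rw [hsingle, if_neg (Ne.symm hrs)]
    rw [hz, map_zero]
    apply lp.ext
    funext j
    rw [hsingle]
    simp
end
end

section
/- The closed linear span L of the operators ξ^{(x,y)}_{(m,n)}(a) − ξ^{(x,y+1)}_{(m,n+1)}(α_{(0,1)}(a)), for a ∈ A and (m,n), (x,y) ∈ ℕ², is a closed two-sided ideal of C, and L equals the closed linear span of the operators θ_{(m,n),(x,y)} ⊗ π(a) (a ∈ A, (m,n),(x,y) ∈ ℕ²), i.e., the spatial copy of K(ℓ²(ℕ²)) ⊗ π(A) inside B(ℓ²(ℕ², H)). -/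
open scoped ENNReal

open scoped InnerProductSpace

noncomputable section

set_option maxHeartbeats 1000000

/-- The closed linear span `L` of the operators
`ξ^{(x,y)}_{(m,n)}(a) − ξ^{(x,y+1)}_{(m,n+1)}(α_{(0,1)}(a))` is a closed two-sided ideal
of `C`, and equals the closed linear span of the operators `θ_{(m,n),(x,y)} ⊗ π(a)`
(the spatial copy of `K(ℓ²(ℕ²)) ⊗ π(A)` in `B(ℓ²(ℕ², H))`). -/
theorem stmt3
    {A : Type*} [NonUnitalNormedRing A] [StarRing A] [CStarRing A]
    [NormedSpace ℂ A] [IsScalarTower ℂ A A] [SMulCommClass ℂ A A] [StarModule ℂ A]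
    [CompleteSpace A]
    {H : Type*} [NormedAddCommGroup H] [InnerProductSpace ℂ H] [CompleteSpace H]
    (α : ℕ × ℕ → (A ≃⋆ₐ[ℂ] A))
    (hα0 : ∀ a : A, α 0 a = a)
    (hαadd : ∀ s t : ℕ × ℕ, ∀ a : A, α (s + t) a = α s (α t a))
    (π : A →⋆ₙₐ[ℂ] (H →L[ℂ] H))
    (hπnd : Dense (↑(Submodule.span ℂ {x : H | ∃ (a : A) (h : H), π a h = x}) : Set H))
    (πt : A → (lp (fun _ : ℕ × ℕ => H) 2 →L[ℂ] lp (fun _ : ℕ × ℕ => H) 2))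
    (V : ℕ × ℕ → (lp (fun _ : ℕ × ℕ => H) 2 →L[ℂ] lp (fun _ : ℕ × ℕ => H) 2))
    (hπt : ∀ (a : A) (f : lp (fun _ : ℕ × ℕ => H) 2) (s : ℕ × ℕ),
      (πt a f) s = π (α s a) (f s))
    (hV : ∀ (t : ℕ × ℕ) (f : lp (fun _ : ℕ × ℕ => H) 2) (s : ℕ × ℕ),
      (V t f) s = f (s + t))
    (ξ : A → ℕ × ℕ → ℕ × ℕ → (lp (fun _ : ℕ × ℕ => H) 2 →L[ℂ] lp (fun _ : ℕ × ℕ => H) 2))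
    (hξ : ∀ (a : A) (u v : ℕ × ℕ), ξ a u v =
      ContinuousLinearMap.adjoint (V u) * πt a *
        (1 - ContinuousLinearMap.adjoint (V (1, 0)) * V (1, 0)) * V v)
    -- `C` is the `C*`-subalgebra generated by the `π̃(a)` and the `V_t`:
    (C : StarSubalgebra ℂ (lp (fun _ : ℕ × ℕ => H) 2 →L[ℂ] lp (fun _ : ℕ × ℕ => H) 2))
    (hC : C = (StarAlgebra.adjoin ℂ (Set.range πt ∪ Set.range V)).topologicalClosure)
    -- `L` is the closed linear span of the differences of `ξ`'s:
    (L : Submodule ℂ (lp (fun _ : ℕ × ℕ => H) 2 →L[ℂ] lp (fun _ : ℕ × ℕ => H) 2))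
    (hL : L = (Submodule.span ℂ
      {T | ∃ (a : A) (m n x y : ℕ),
        T = ξ a (m, n) (x, y) - ξ (α (0, 1) a) (m, n + 1) (x, y + 1)}).topologicalClosure) :
    -- `L` is a closed two-sided ideal of `C`:
    IsClosed (L : Set (lp (fun _ : ℕ × ℕ => H) 2 →L[ℂ] lp (fun _ : ℕ × ℕ => H) 2)) ∧
    (∀ T ∈ L, T ∈ C) ∧
    (∀ X ∈ C, ∀ T ∈ L, X * T ∈ L ∧ T * X ∈ L) ∧
    -- `L` is the closed linear span of the operators `θ_{(m,n),(x,y)} ⊗ π(a)`: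
    L = (Submodule.span ℂ
      {T : lp (fun _ : ℕ × ℕ => H) 2 →L[ℂ] lp (fun _ : ℕ × ℕ => H) 2 |
        ∃ (a : A) (m n x y : ℕ), ∀ f : lp (fun _ : ℕ × ℕ => H) 2,
          T f = lp.single 2 (m, n) (π a (f (x, y)))}).topologicalClosure := by
  classical
  set GS : Set (lp (fun _ : ℕ × ℕ => H) 2 →L[ℂ] lp (fun _ : ℕ × ℕ => H) 2) :=
    {T : lp (fun _ : ℕ × ℕ => H) 2 →L[ℂ] lp (fun _ : ℕ × ℕ => H) 2 |
      ∃ (a : A) (m n x y : ℕ), ∀ f : lp (fun _ : ℕ × ℕ => H) 2,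
        T f = lp.single 2 (m, n) (π a (f (x, y)))} with hGSdef
  -- pointwise subtraction on lp
  have hsub : ∀ (f g : lp (fun _ : ℕ × ℕ => H) 2) (s : ℕ × ℕ), (f - g) s = f s - g s := by
    intro f g s
    rw [lp.coeFn_sub]
    rfl
  -- action of `V t` on elementary vectors
  have hVsingle : ∀ (t u : ℕ × ℕ) (h : H),
      V t (lp.single 2 u h) = if t ≤ u then lp.single 2 (u - t) h else 0 := by
    intro t u h
    apply lp.ext
    funext s
    rw [hV]
    by_cases hle : t ≤ u
    · rw [if_pos hle]
      by_cases hs : s = u - t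
      · subst hs
        have e : u - t + t = u := by
          obtain ⟨t1, t2⟩ := t; obtain ⟨u1, u2⟩ := u
          rw [Prod.mk_le_mk] at hle
          simp only [Prod.mk_sub_mk, Prod.mk_add_mk, Prod.mk.injEq]
          omega
        rw [e, lp.single_apply_self, lp.single_apply_self]
      · have hne : s + t ≠ u := by
          intro hc
          apply hs
          obtain ⟨t1, t2⟩ := t; obtain ⟨u1, u2⟩ := u; obtain ⟨s1, s2⟩ := s
          simp only [Prod.mk_add_mk, Prod.mk.injEq] at hc
          simp only [Prod.mk_sub_mk, Prod.mk.injEq]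
          omega
        rw [lp.single_apply_ne _ _ _ hne, lp.single_apply_ne _ _ _ hs]
    · rw [if_neg hle]
      have hne : s + t ≠ u := by
        intro hc
        apply hle
        obtain ⟨t1, t2⟩ := t; obtain ⟨u1, u2⟩ := u; obtain ⟨s1, s2⟩ := s
        simp only [Prod.mk_add_mk, Prod.mk.injEq] at hc
        rw [Prod.mk_le_mk]
        omega
      rw [lp.single_apply_ne _ _ _ hne]
      rfl
  -- pointwise formula for the adjoint of `V t`
  have hVadj : ∀ (t : ℕ × ℕ) (g : lp (fun _ : ℕ × ℕ => H) 2) (s : ℕ × ℕ),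
      (ContinuousLinearMap.adjoint (V t) g) s = if t ≤ s then g (s - t) else 0 := by
    intro t g s
    apply ext_inner_right ℂ
    intro h
    have h1 : ⟪(ContinuousLinearMap.adjoint (V t) g) s, h⟫_ℂ
        = ⟪g, V t (lp.single 2 s h)⟫_ℂ := by
      calc ⟪(ContinuousLinearMap.adjoint (V t) g) s, h⟫_ℂ
          = ⟪ContinuousLinearMap.adjoint (V t) g, lp.single 2 s h⟫_ℂ :=
            (lp.inner_single_right _ _ _).symm
        _ = ⟪g, V t (lp.single 2 s h)⟫_ℂ := ContinuousLinearMap.adjoint_inner_left _ _ _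
    rw [h1, hVsingle]
    split_ifs with hle
    · rw [lp.inner_single_right]
    · rw [inner_zero_right, inner_zero_left]
  -- action of adjoint of `V t` on elementary vectors
  have hVadjsingle : ∀ (t u : ℕ × ℕ) (h : H),
      ContinuousLinearMap.adjoint (V t) (lp.single 2 u h) = lp.single 2 (u + t) h := by
    intro t u h
    apply lp.ext
    funext s
    rw [hVadj]
    by_cases hle : t ≤ s
    · by_cases hs : s = u + t
      · subst hs
        have e : u + t - t = u := by
          obtain ⟨t1, t2⟩ := t; obtain ⟨u1, u2⟩ := u
          simp only [Prod.mk_add_mk, Prod.mk_sub_mk, Prod.mk.injEq]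
          omega
        rw [if_pos hle, e, lp.single_apply_self, lp.single_apply_self]
      · have hne : s - t ≠ u := by
          intro hc
          apply hs
          obtain ⟨s1, s2⟩ := s; obtain ⟨t1, t2⟩ := t; obtain ⟨u1, u2⟩ := u
          rw [Prod.mk_le_mk] at hle
          simp only [Prod.mk_sub_mk, Prod.mk.injEq] at hc
          simp only [Prod.mk_add_mk, Prod.mk.injEq]
          omega
        rw [if_pos hle, lp.single_apply_ne _ _ _ hne, lp.single_apply_ne _ _ _ hs]
    · have hne : s ≠ u + t := by
        intro hc
        apply hle
        subst hc
        obtain ⟨t1, t2⟩ := t; obtain ⟨u1, u2⟩ := u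
        simp only [Prod.mk_add_mk, Prod.mk_le_mk]
        omega
      rw [if_neg hle, lp.single_apply_ne _ _ _ hne]
  -- action of `πt b` on elementary vectors
  have hπtsingle : ∀ (b : A) (u : ℕ × ℕ) (h : H),
      πt b (lp.single 2 u h) = lp.single 2 u (π (α u b) h) := by
    intro b u h
    apply lp.ext
    funext s
    rw [hπt]
    by_cases hs : s = u
    · subst hs
      rw [lp.single_apply_self, lp.single_apply_self]
    · rw [lp.single_apply_ne _ _ _ hs, lp.single_apply_ne _ _ _ hs, map_zero]
  have hsingle_zero : ∀ u : ℕ × ℕ,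
      (lp.single 2 u (0 : H) : lp (fun _ : ℕ × ℕ => H) 2) = 0 := by
    intro u
    apply lp.ext
    funext s
    by_cases hs : s = u
    · subst hs; rw [lp.single_apply_self]; rfl
    · rw [lp.single_apply_ne _ _ _ hs]; rfl
  -- the projection `1 - V(1,0)* V(1,0)`
  have hP : ∀ (g : lp (fun _ : ℕ × ℕ => H) 2) (w : ℕ × ℕ),
      ((1 - ContinuousLinearMap.adjoint (V (1, 0)) * V (1, 0)) g) w
        = if w.1 = 0 then g w else 0 := by
    intro g w
    have h1 : (1 - ContinuousLinearMap.adjoint (V (1, 0)) * V (1, 0)) g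
        = g - ContinuousLinearMap.adjoint (V (1, 0)) (V (1, 0) g) := rfl
    rw [h1, hsub, hVadj]
    obtain ⟨w1, w2⟩ := w
    by_cases h0 : w1 = 0
    · subst h0
      have hnle : ¬(((1 : ℕ), (0 : ℕ)) ≤ ((0 : ℕ), w2)) := by
        rw [Prod.mk_le_mk]; omega
      rw [if_neg hnle, if_pos rfl, sub_zero]
    · have hle : (((1 : ℕ), (0 : ℕ)) : ℕ × ℕ) ≤ (w1, w2) := by
        rw [Prod.mk_le_mk]; omega
      have e : ((w1, w2) : ℕ × ℕ) - (1, 0) + (1, 0) = (w1, w2) := by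
        simp only [Prod.mk_sub_mk, Prod.mk_add_mk, Prod.mk.injEq]
        omega
      rw [if_pos hle, hV, e, sub_self, if_neg h0]
  -- pointwise formula for ξ
  have hXi : ∀ (a : A) (m n x y : ℕ) (f : lp (fun _ : ℕ × ℕ => H) 2) (s1 s2 : ℕ),
      (ξ a (m, n) (x, y) f) (s1, s2)
        = if s1 = m ∧ n ≤ s2 then π (α (0, s2 - n) a) (f (x, s2 - n + y)) else 0 := by
    intro a m n x y f s1 s2
    have h1 : ξ a (m, n) (x, y) f
        = ContinuousLinearMap.adjoint (V (m, n))
            (πt a ((1 - ContinuousLinearMap.adjoint (V (1, 0)) * V (1, 0)) (V (x, y) f))) := by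
      rw [hξ]; rfl
    rw [h1, hVadj]
    by_cases hle : ((m, n) : ℕ × ℕ) ≤ (s1, s2)
    · rw [if_pos hle, hπt, hP]
      rw [Prod.mk_le_mk] at hle
      by_cases h0 : s1 = m
      · subst h0
        have e1 : ((s1, s2) : ℕ × ℕ) - (s1, n) = ((0 : ℕ), s2 - n) := by
          ext <;> simp <;> omega
        rw [e1, if_pos rfl, hV, if_pos ⟨rfl, hle.2⟩]
        have e2 : (((0 : ℕ), s2 - n) : ℕ × ℕ) + (x, y) = (x, s2 - n + y) := by
          ext <;> simp <;> omega
        rw [e2]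
      · have e2 : (((s1, s2) : ℕ × ℕ) - (m, n)).1 ≠ 0 := by
          simp only [Prod.mk_sub_mk]
          omega
        rw [if_neg e2, map_zero, if_neg (by tauto)]
    · rw [if_neg hle, if_neg]
      rintro ⟨rfl, h2⟩
      exact hle (by rw [Prod.mk_le_mk]; exact ⟨le_refl _, h2⟩)
  -- the key computation: the generators of `L` are the rank-one tensors
  have hKey : ∀ (a : A) (m n x y : ℕ) (f : lp (fun _ : ℕ × ℕ => H) 2),
      (ξ a (m, n) (x, y) - ξ (α (0, 1) a) (m, n + 1) (x, y + 1)) f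
        = lp.single 2 (m, n) (π a (f (x, y))) := by
    intro a m n x y f
    apply lp.ext
    funext s
    obtain ⟨s1, s2⟩ := s
    rw [ContinuousLinearMap.sub_apply, hsub, hXi, hXi]
    by_cases h0 : s1 = m ∧ s2 = n
    · obtain ⟨rfl, rfl⟩ := h0
      have hne2 : ¬(s1 = s1 ∧ s2 + 1 ≤ s2) := by omega
      rw [if_pos ⟨rfl, le_refl _⟩, if_neg hne2, sub_zero, lp.single_apply_self]
      have e0 : (((0 : ℕ), s2 - s2) : ℕ × ℕ) = 0 := by
        rw [Nat.sub_self]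
        rfl
      rw [e0, hα0]
      have e3 : s2 - s2 + y = y := by omega
      rw [e3]
    · have hne : ((s1, s2) : ℕ × ℕ) ≠ (m, n) := by
        intro hc
        rw [Prod.mk.injEq] at hc
        exact h0 hc
      rw [lp.single_apply_ne _ _ _ hne]
      by_cases h1 : s1 = m ∧ n ≤ s2
      · obtain ⟨rfl, hn⟩ := h1
        have hn' : n + 1 ≤ s2 := by
          rcases Nat.eq_or_lt_of_le hn with h | h
          · exact absurd ⟨rfl, h.symm⟩ h0
          · omega
        rw [if_pos ⟨rfl, hn⟩, if_pos ⟨rfl, hn'⟩]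
        have ep : (((0 : ℕ), s2 - (n + 1)) : ℕ × ℕ) + (0, 1) = ((0 : ℕ), s2 - n) := by
          ext <;> simp <;> omega
        have e1 : α ((0 : ℕ), s2 - (n + 1)) (α (0, 1) a) = α (0, s2 - n) a := by
          rw [← hαadd, ep]
        have e2 : s2 - (n + 1) + (y + 1) = s2 - n + y := by omega
        rw [e1, e2, sub_self]
      · have h1' : ¬(s1 = m ∧ n + 1 ≤ s2) := by
          rintro ⟨rfl, hh⟩
          exact h1 ⟨rfl, by omega⟩
        rw [if_neg h1, if_neg h1', sub_zero]
  -- the two generating sets coincide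
  have hseteq : {T | ∃ (a : A) (m n x y : ℕ),
        T = ξ a (m, n) (x, y) - ξ (α (0, 1) a) (m, n + 1) (x, y + 1)} = GS := by
    ext T
    constructor
    · rintro ⟨a, m, n, x, y, rfl⟩
      exact ⟨a, m, n, x, y, fun f => hKey a m n x y f⟩
    · rintro ⟨a, m, n, x, y, hT⟩
      exact ⟨a, m, n, x, y,
        ContinuousLinearMap.ext fun f => (hT f).trans (hKey a m n x y f).symm⟩
  have hL' : L = (Submodule.span ℂ GS).topologicalClosure := by
    rw [hL, hseteq]
  have hLclosed : IsClosed (L : Set (lp (fun _ : ℕ × ℕ => H) 2 →L[ℂ] lp (fun _ : ℕ × ℕ => H) 2)) := by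
    rw [hL]
    exact Submodule.isClosed_topologicalClosure _
  have hformL : ∀ T : lp (fun _ : ℕ × ℕ => H) 2 →L[ℂ] lp (fun _ : ℕ × ℕ => H) 2,
      T ∈ GS → T ∈ L := by
    intro T hT
    rw [hL']
    exact Submodule.le_topologicalClosure _ (Submodule.subset_span hT)
  -- stability lemmas
  have stabL : ∀ X : lp (fun _ : ℕ × ℕ => H) 2 →L[ℂ] lp (fun _ : ℕ × ℕ => H) 2,
      (∀ T ∈ GS, X * T ∈ L) → ∀ T ∈ L, X * T ∈ L := by
    intro X hX T hT
    let S' : Submodule ℂ (lp (fun _ : ℕ × ℕ => H) 2 →L[ℂ] lp (fun _ : ℕ × ℕ => H) 2) :=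
      { carrier := {T | X * T ∈ L}
        add_mem' := fun ha hb => by
          simp only [Set.mem_setOf_eq, mul_add] at *
          exact add_mem ha hb
        zero_mem' := by
          simp only [Set.mem_setOf_eq, mul_zero]
          exact zero_mem L
        smul_mem' := fun c x hx => by
          simp only [Set.mem_setOf_eq, mul_smul_comm] at *
          exact Submodule.smul_mem _ _ hx }
    have hclosed : IsClosed (S' : Set (lp (fun _ : ℕ × ℕ => H) 2 →L[ℂ] lp (fun _ : ℕ × ℕ => H) 2)) :=
      hLclosed.preimage (continuous_mul_left X)
    have hle : L ≤ S' := by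
      rw [hL']
      exact Submodule.topologicalClosure_minimal _ (Submodule.span_le.2 hX) hclosed
    exact hle hT
  have stabR : ∀ X : lp (fun _ : ℕ × ℕ => H) 2 →L[ℂ] lp (fun _ : ℕ × ℕ => H) 2,
      (∀ T ∈ GS, T * X ∈ L) → ∀ T ∈ L, T * X ∈ L := by
    intro X hX T hT
    let S' : Submodule ℂ (lp (fun _ : ℕ × ℕ => H) 2 →L[ℂ] lp (fun _ : ℕ × ℕ => H) 2) :=
      { carrier := {T | T * X ∈ L}
        add_mem' := fun ha hb => by
          simp only [Set.mem_setOf_eq, add_mul] at *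
          exact add_mem ha hb
        zero_mem' := by
          simp only [Set.mem_setOf_eq, zero_mul]
          exact zero_mem L
        smul_mem' := fun c x hx => by
          simp only [Set.mem_setOf_eq, smul_mul_assoc] at *
          exact Submodule.smul_mem _ _ hx }
    have hclosed : IsClosed (S' : Set (lp (fun _ : ℕ × ℕ => H) 2 →L[ℂ] lp (fun _ : ℕ × ℕ => H) 2)) :=
      hLclosed.preimage (continuous_mul_right X)
    have hle : L ≤ S' := by
      rw [hL']
      exact Submodule.topologicalClosure_minimal _ (Submodule.span_le.2 hX) hclosed
    exact hle hT
  -- generator computations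
  have hπtGL : ∀ b : A, ∀ T ∈ GS, πt b * T ∈ L := by
    rintro b T ⟨a, m, n, x, y, hT⟩
    apply hformL
    refine ⟨α (m, n) b * a, m, n, x, y, fun f => ?_⟩
    have h1 : (πt b * T) f = πt b (T f) := rfl
    rw [h1, hT f, hπtsingle]
    congr 1
    rw [map_mul]
    rfl
  have hπtGR : ∀ b : A, ∀ T ∈ GS, T * πt b ∈ L := by
    rintro b T ⟨a, m, n, x, y, hT⟩
    apply hformL
    refine ⟨a * α (x, y) b, m, n, x, y, fun f => ?_⟩
    have h1 : (T * πt b) f = T (πt b f) := rfl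
    rw [h1, hT (πt b f), hπt]
    congr 1
    rw [map_mul]
    rfl
  have hVGL : ∀ t : ℕ × ℕ, ∀ T ∈ GS, V t * T ∈ L := by
    rintro t T ⟨a, m, n, x, y, hT⟩
    by_cases hle : t ≤ ((m, n) : ℕ × ℕ)
    · apply hformL
      refine ⟨a, (((m, n) : ℕ × ℕ) - t).1, (((m, n) : ℕ × ℕ) - t).2, x, y, fun f => ?_⟩
      have h1 : (V t * T) f = V t (T f) := rfl
      rw [h1, hT f, hVsingle, if_pos hle, Prod.mk.eta]
    · have h0 : V t * T = 0 := by
        apply ContinuousLinearMap.ext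
        intro f
        have h1 : (V t * T) f = V t (T f) := rfl
        rw [h1, hT f, hVsingle, if_neg hle]
        rfl
      rw [h0]
      exact zero_mem L
  have hVGR : ∀ t : ℕ × ℕ, ∀ T ∈ GS, T * V t ∈ L := by
    rintro t T ⟨a, m, n, x, y, hT⟩
    apply hformL
    refine ⟨a, m, n, (((x, y) : ℕ × ℕ) + t).1, (((x, y) : ℕ × ℕ) + t).2, fun f => ?_⟩
    have h1 : (T * V t) f = T (V t f) := rfl
    rw [h1, hT (V t f), hV, Prod.mk.eta]
  have hVaGL : ∀ t : ℕ × ℕ, ∀ T ∈ GS, ContinuousLinearMap.adjoint (V t) * T ∈ L := by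
    rintro t T ⟨a, m, n, x, y, hT⟩
    apply hformL
    refine ⟨a, (((m, n) : ℕ × ℕ) + t).1, (((m, n) : ℕ × ℕ) + t).2, x, y, fun f => ?_⟩
    have h1 : (ContinuousLinearMap.adjoint (V t) * T) f
        = ContinuousLinearMap.adjoint (V t) (T f) := rfl
    rw [h1, hT f, hVadjsingle, Prod.mk.eta]
  have hVaGR : ∀ t : ℕ × ℕ, ∀ T ∈ GS, T * ContinuousLinearMap.adjoint (V t) ∈ L := by
    rintro t T ⟨a, m, n, x, y, hT⟩
    by_cases hle : t ≤ ((x, y) : ℕ × ℕ)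
    · apply hformL
      refine ⟨a, m, n, (((x, y) : ℕ × ℕ) - t).1, (((x, y) : ℕ × ℕ) - t).2, fun f => ?_⟩
      have h1 : (T * ContinuousLinearMap.adjoint (V t)) f
          = T (ContinuousLinearMap.adjoint (V t) f) := rfl
      rw [h1, hT (ContinuousLinearMap.adjoint (V t) f), hVadj, if_pos hle, Prod.mk.eta]
    · have h0 : T * ContinuousLinearMap.adjoint (V t) = 0 := by
        apply ContinuousLinearMap.ext
        intro f
        have h1 : (T * ContinuousLinearMap.adjoint (V t)) f
            = T (ContinuousLinearMap.adjoint (V t) f) := rfl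
        rw [h1, hT (ContinuousLinearMap.adjoint (V t) f), hVadj, if_neg hle, map_zero,
          hsingle_zero]
        rfl
      rw [h0]
      exact zero_mem L
  -- `GS` and `L` are closed under `star`
  have hstarGS : ∀ T ∈ GS, star T ∈ GS := by
    rintro T ⟨a, m, n, x, y, hT⟩
    refine ⟨star a, x, y, m, n, fun f => ?_⟩
    rw [ContinuousLinearMap.star_eq_adjoint]
    apply ext_inner_right ℂ
    intro g
    rw [ContinuousLinearMap.adjoint_inner_left, hT g, lp.inner_single_right,
      lp.inner_single_left, map_star, ContinuousLinearMap.star_eq_adjoint,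
      ContinuousLinearMap.adjoint_inner_left]
  have hstarL : ∀ T ∈ L, star T ∈ L := by
    intro T hT
    let S' : Submodule ℂ (lp (fun _ : ℕ × ℕ => H) 2 →L[ℂ] lp (fun _ : ℕ × ℕ => H) 2) :=
      { carrier := {T | star T ∈ L}
        add_mem' := fun ha hb => by
          simp only [Set.mem_setOf_eq, star_add] at *
          exact add_mem ha hb
        zero_mem' := by
          simp only [Set.mem_setOf_eq, star_zero]
          exact zero_mem L
        smul_mem' := fun c x hx => by
          simp only [Set.mem_setOf_eq, star_smul] at *
          exact Submodule.smul_mem _ _ hx }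
    have hclosed : IsClosed (S' : Set (lp (fun _ : ℕ × ℕ => H) 2 →L[ℂ] lp (fun _ : ℕ × ℕ => H) 2)) :=
      hLclosed.preimage continuous_star
    have hle : L ≤ S' := by
      rw [hL']
      refine Submodule.topologicalClosure_minimal _ (Submodule.span_le.2 ?_) hclosed
      intro T hT
      exact hformL (star T) (hstarGS T hT)
    exact hle hT
  -- membership of the generators of `C` in `C`
  have hπtC : ∀ b : A, πt b ∈ C := by
    intro b
    rw [hC]
    exact StarSubalgebra.le_topologicalClosure _
      (StarAlgebra.subset_adjoin ℂ _ (Set.mem_union_left _ ⟨b, rfl⟩))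
  have hVC : ∀ t : ℕ × ℕ, V t ∈ C := by
    intro t
    rw [hC]
    exact StarSubalgebra.le_topologicalClosure _
      (StarAlgebra.subset_adjoin ℂ _ (Set.mem_union_right _ ⟨t, rfl⟩))
  have hVaC : ∀ t : ℕ × ℕ, ContinuousLinearMap.adjoint (V t) ∈ C := by
    intro t
    rw [← ContinuousLinearMap.star_eq_adjoint]
    exact star_mem (hVC t)
  have hξC : ∀ (a : A) (u v : ℕ × ℕ), ξ a u v ∈ C := by
    intro a u v
    rw [hξ]
    exact mul_mem (mul_mem (mul_mem (hVaC u) (hπtC a))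
      (sub_mem (one_mem C) (mul_mem (hVaC (1, 0)) (hVC (1, 0))))) (hVC v)
  have hCclosed : IsClosed (C : Set (lp (fun _ : ℕ × ℕ => H) 2 →L[ℂ] lp (fun _ : ℕ × ℕ => H) 2)) := by
    rw [hC]
    exact StarSubalgebra.isClosed_topologicalClosure _
  -- `L ⊆ C`
  have hLC : ∀ T ∈ L, T ∈ C := by
    intro T hT
    have hle : L ≤ Subalgebra.toSubmodule C.toSubalgebra := by
      rw [hL]
      refine Submodule.topologicalClosure_minimal _ (Submodule.span_le.2 ?_) hCclosed
      rintro T ⟨a, m, n, x, y, rfl⟩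
      exact sub_mem (hξC a (m, n) (x, y)) (hξC (α (0, 1) a) (m, n + 1) (x, y + 1))
    exact hle hT
  -- the ideal property
  have hQ : ∀ X ∈ C, ∀ T ∈ L, X * T ∈ L ∧ T * X ∈ L := by
    have hQclosed : IsClosed {X : lp (fun _ : ℕ × ℕ => H) 2 →L[ℂ] lp (fun _ : ℕ × ℕ => H) 2 |
        ∀ T ∈ L, X * T ∈ L ∧ T * X ∈ L} := by
      have he : {X : lp (fun _ : ℕ × ℕ => H) 2 →L[ℂ] lp (fun _ : ℕ × ℕ => H) 2 |
            ∀ T ∈ L, X * T ∈ L ∧ T * X ∈ L}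
          = ⋂ T ∈ (L : Set (lp (fun _ : ℕ × ℕ => H) 2 →L[ℂ] lp (fun _ : ℕ × ℕ => H) 2)),
              ((fun X => X * T) ⁻¹' L ∩ (fun X => T * X) ⁻¹' L) := by
        ext X
        simp only [Set.mem_setOf_eq, Set.mem_iInter, Set.mem_inter_iff, Set.mem_preimage,
          SetLike.mem_coe]
      rw [he]
      exact isClosed_biInter fun T _ =>
        (hLclosed.preimage (continuous_mul_right T)).inter
          (hLclosed.preimage (continuous_mul_left T))
    have hadj : (↑(StarAlgebra.adjoin ℂ (Set.range πt ∪ Set.range V)) :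
          Set (lp (fun _ : ℕ × ℕ => H) 2 →L[ℂ] lp (fun _ : ℕ × ℕ => H) 2))
        ⊆ {X | ∀ T ∈ L, X * T ∈ L ∧ T * X ∈ L} := by
      intro X hX
      induction hX using StarAlgebra.adjoin_induction with
      | mem x hx =>
        rcases hx with ⟨b, rfl⟩ | ⟨t, rfl⟩
        · exact fun T hT => ⟨stabL _ (hπtGL b) T hT, stabR _ (hπtGR b) T hT⟩
        · exact fun T hT => ⟨stabL _ (hVGL t) T hT, stabR _ (hVGR t) T hT⟩
      | algebraMap r =>
        intro T hT
        constructor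
        · rw [Algebra.algebraMap_eq_smul_one, smul_mul_assoc, one_mul]
          exact Submodule.smul_mem _ _ hT
        · rw [Algebra.algebraMap_eq_smul_one, mul_smul_comm, mul_one]
          exact Submodule.smul_mem _ _ hT
      | add x y hx hy ihx ihy =>
        intro T hT
        exact ⟨by rw [add_mul]; exact add_mem (ihx T hT).1 (ihy T hT).1,
          by rw [mul_add]; exact add_mem (ihx T hT).2 (ihy T hT).2⟩
      | mul x y hx hy ihx ihy =>
        intro T hT
        constructor
        · rw [mul_assoc]
          exact (ihx _ (ihy T hT).1).1
        · rw [← mul_assoc]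
          exact (ihy _ (ihx T hT).2).2
      | star x hx ihx =>
        intro T hT
        constructor
        · have h1 : star T * x ∈ L := (ihx _ (hstarL T hT)).2
          have h2 : star (star T * x) ∈ L := hstarL _ h1
          rwa [star_mul, star_star] at h2
        · have h1 : x * star T ∈ L := (ihx _ (hstarL T hT)).1
          have h2 : star (x * star T) ∈ L := hstarL _ h1
          rwa [star_mul, star_star] at h2
    intro X hX
    rw [hC] at hX
    have hXcl : X ∈ closure (↑(StarAlgebra.adjoin ℂ (Set.range πt ∪ Set.range V)) :
        Set (lp (fun _ : ℕ × ℕ => H) 2 →L[ℂ] lp (fun _ : ℕ × ℕ => H) 2)) := hX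
    exact closure_minimal hadj hQclosed hXcl
  exact ⟨hLclosed, hLC, hQ, hL'⟩
end
end

section
/- If π is faithful, then L is an essential ideal of C: every X ∈ C with X·L = {0} is zero; equivalently, every nonzero closed two-sided ideal of C has nonzero intersection with L. -/
open scoped ENNReal

noncomputable section

set_option linter.unusedSectionVars false

namespace Stmt4Aux

variable {H : Type*} [NormedAddCommGroup H] [InnerProductSpace ℂ H] [CompleteSpace H]

local notation "ℓH" => lp (fun _ : ℕ × ℕ => H) 2

lemma two_pos_toReal : (0:ℝ) < (2 : ℝ≥0∞).toReal := by norm_num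

lemma two_ne_zero' : (2 : ℝ≥0∞) ≠ 0 := by norm_num

/-- evaluation at a point as a CLM -/
def evalCLM (i : ℕ × ℕ) : ℓH →L[ℂ] H :=
  LinearMap.mkContinuous
    { toFun := fun f => f i
      map_add' := fun f g => by simp [lp.coeFn_add]
      map_smul' := fun c f => by simp [lp.coeFn_smul] } 1
    (fun f => by rw [one_mul]; exact lp.norm_apply_le_norm two_ne_zero' f i)

@[simp] lemma evalCLM_apply (i : ℕ × ℕ) (f : ℓH) : evalCLM i f = f i := rfl

lemma single_apply' (i : ℕ × ℕ) (v : H) (j : ℕ × ℕ) :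
    (lp.single 2 i v : ℓH) j = if j = i then v else 0 := by
  by_cases h : j = i
  · subst h; simp [lp.single_apply_self]
  · simp [lp.single_apply_ne _ _ _ h, h]

/-- `lp.single` as a CLM -/
def singleCLM (i : ℕ × ℕ) : H →L[ℂ] ℓH :=
  LinearMap.mkContinuous
    { toFun := fun v => lp.single 2 i v
      map_add' := fun v w => by
        apply lp.ext; funext j
        rw [lp.coeFn_add]
        simp only [single_apply', Pi.add_apply]
        split_ifs <;> simp
      map_smul' := fun c v => by
        apply lp.ext; funext j
        rw [lp.coeFn_smul]
        simp only [single_apply', Pi.smul_apply]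
        split_ifs <;> simp } 1
    (fun v => by
      simpa using (lp.norm_single two_pos_toReal (fun _ : ℕ × ℕ => v) i).le)

@[simp] lemma singleCLM_apply (i : ℕ × ℕ) (v : H) (j : ℕ × ℕ) :
    (singleCLM i v) j = if j = i then v else 0 := single_apply' i v j

/-- rank-one type operator -/
def rankOne (T : H →L[ℂ] H) (u v : ℕ × ℕ) : ℓH →L[ℂ] ℓH :=
  singleCLM u ∘L T ∘L evalCLM v

lemma rankOne_apply (T : H →L[ℂ] H) (u v : ℕ × ℕ) (f : ℓH) (s : ℕ × ℕ) :
    (rankOne T u v f) s = if s = u then T (f v) else 0 := by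
  simp [rankOne]

lemma prod_sub_add_cancel {t s : ℕ × ℕ} (h : t ≤ s) : s - t + t = s := by
  obtain ⟨a, b⟩ := s; obtain ⟨c, d⟩ := t
  rw [Prod.mk_le_mk] at h
  simp only [Prod.mk_sub_mk, Prod.mk_add_mk, Prod.mk.injEq]
  omega

lemma prod_add_sub_cancel (u t : ℕ × ℕ) : u + t - t = u := by
  obtain ⟨a, b⟩ := u; obtain ⟨c, d⟩ := t
  simp only [Prod.mk_sub_mk, Prod.mk_add_mk, Prod.mk.injEq]
  omega

/-- the forward-shift function -/
def shiftFun (t : ℕ × ℕ) (f : ℕ × ℕ → H) : ℕ × ℕ → H :=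
  fun s => if t ≤ s then f (s - t) else 0

lemma shiftFun_add_apply (t : ℕ × ℕ) (f : ℕ × ℕ → H) (u : ℕ × ℕ) :
    shiftFun t f (u + t) = f u := by
  rw [shiftFun, if_pos le_add_self, prod_add_sub_cancel]

lemma shiftFun_of_not_mem {t s : ℕ × ℕ} (f : ℕ × ℕ → H)
    (h : s ∉ Set.range (· + t)) : shiftFun t f s = 0 := by
  rw [shiftFun, if_neg]
  intro hle
  exact h ⟨s - t, prod_sub_add_cancel hle⟩

lemma shift_memℓp (t : ℕ × ℕ) (f : ℓH) : Memℓp (shiftFun t (f : ℕ × ℕ → H)) 2 := by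
  apply memℓp_gen
  have hs : Summable fun i => ‖(f : ℕ × ℕ → H) i‖ ^ (2 : ℝ≥0∞).toReal :=
    (lp.memℓp f).summable (by norm_num)
  have hinj : Function.Injective (fun u : ℕ × ℕ => u + t) := add_left_injective t
  refine (Function.Injective.summable_iff hinj ?_).1 ?_
  · intro x hx
    rw [shiftFun_of_not_mem _ hx]
    simp [two_pos_toReal.ne']
  · convert hs using 1
    funext u
    simp [Function.comp, shiftFun_add_apply]

/-- forward shift as a CLM on `ℓ²` -/
def Wop (t : ℕ × ℕ) : ℓH →L[ℂ] ℓH :=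
  LinearMap.mkContinuous
    { toFun := fun f => (⟨shiftFun t (f : ℕ × ℕ → H), shift_memℓp t f⟩ : ℓH)
      map_add' := fun f g => by
        apply lp.ext; funext s
        rw [lp.coeFn_add (⟨shiftFun t f, shift_memℓp t f⟩ : ℓH)]
        show shiftFun t (f + g : ℓH) s = shiftFun t f s + shiftFun t g s
        simp only [shiftFun, lp.coeFn_add, Pi.add_apply]
        split_ifs <;> simp
      map_smul' := fun c f => by
        apply lp.ext; funext s
        rw [lp.coeFn_smul (f := (⟨shiftFun t f, shift_memℓp t f⟩ : ℓH))]
        show shiftFun t (c • f : ℓH) s = c • shiftFun t f s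
        simp only [shiftFun, lp.coeFn_smul, Pi.smul_apply]
        split_ifs <;> simp } 1
    (fun f => by
      show ‖(⟨shiftFun t (f : ℕ × ℕ → H), shift_memℓp t f⟩ : ℓH)‖ ≤ 1 * ‖f‖
      have h2 : ‖(⟨shiftFun t (f : ℕ × ℕ → H), shift_memℓp t f⟩ : ℓH)‖ ^ (2 : ℝ≥0∞).toReal
          = ‖f‖ ^ (2 : ℝ≥0∞).toReal := by
        rw [lp.norm_rpow_eq_tsum two_pos_toReal, lp.norm_rpow_eq_tsum two_pos_toReal]
        have hinj : Function.Injective (fun u : ℕ × ℕ => u + t) := add_left_injective t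
        rw [← Function.Injective.tsum_eq hinj (f := fun s =>
            ‖(⟨shiftFun t (f : ℕ × ℕ → H), shift_memℓp t f⟩ : ℓH) s‖ ^ (2 : ℝ≥0∞).toReal)]
        · apply tsum_congr; intro u
          show ‖shiftFun t (f : ℕ × ℕ → H) (u + t)‖ ^ _ = _
          rw [shiftFun_add_apply]
        · intro x hx
          by_contra hxr
          apply Function.mem_support.1 hx
          show ‖shiftFun t (f : ℕ × ℕ → H) x‖ ^ _ = 0
          rw [shiftFun_of_not_mem _ hxr]
          simp [two_pos_toReal.ne']
      have h1 : ‖(⟨shiftFun t (f : ℕ × ℕ → H), shift_memℓp t f⟩ : ℓH)‖ ^ (2:ℕ)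
          = ‖f‖ ^ (2:ℕ) := by
        have := h2
        rw [show (2 : ℝ≥0∞).toReal = ((2:ℕ):ℝ) by norm_num,
          Real.rpow_natCast, Real.rpow_natCast] at this
        exact this
      have hn1 : (0:ℝ) ≤ ‖(⟨shiftFun t (f : ℕ × ℕ → H), shift_memℓp t f⟩ : ℓH)‖ :=
        norm_nonneg _
      have hn2 : (0:ℝ) ≤ ‖f‖ := norm_nonneg _
      nlinarith [h1, hn1, hn2])

@[simp] lemma Wop_apply (t : ℕ × ℕ) (f : ℓH) (s : ℕ × ℕ) :
    (Wop t f) s = if t ≤ s then f (s - t) else 0 := rfl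


lemma Wop_eq_adjoint (t : ℕ × ℕ) (Vt : ℓH →L[ℂ] ℓH)
    (hVt : ∀ (f : ℓH) (s : ℕ × ℕ), (Vt f) s = f (s + t)) :
    ContinuousLinearMap.adjoint Vt = Wop t := by
  symm
  refine (ContinuousLinearMap.eq_adjoint_iff (Wop t) Vt).2 (fun f g => ?_)
  rw [lp.inner_eq_tsum, lp.inner_eq_tsum]
  have hinj : Function.Injective (fun u : ℕ × ℕ => u + t) := add_left_injective t
  rw [← Function.Injective.tsum_eq hinj
    (f := fun s => (inner ℂ ((Wop t f) s) (g s) : ℂ)) ?_]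
  · apply tsum_congr; intro u
    have h1 : (Wop t f) (u + t) = f u := by
      show shiftFun t (f : ℕ × ℕ → H) (u + t) = f u
      exact shiftFun_add_apply t _ u
    rw [h1, hVt]
  · intro x hx
    by_contra hxr
    apply Function.mem_support.1 hx
    have h0 : (Wop t f) x = 0 := shiftFun_of_not_mem _ hxr
    rw [h0]
    simp

lemma rankOne_eq_single (T : H →L[ℂ] H) (u v : ℕ × ℕ) (f : ℓH) :
    rankOne T u v f = lp.single 2 u (T (f v)) := rfl

lemma adjoint_rankOne (T : H →L[ℂ] H) (u v : ℕ × ℕ) :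
    ContinuousLinearMap.adjoint (rankOne T u v)
      = rankOne (ContinuousLinearMap.adjoint T) v u := by
  symm
  refine (ContinuousLinearMap.eq_adjoint_iff _ _).2 (fun f g => ?_)
  rw [rankOne_eq_single, rankOne_eq_single, lp.inner_single_left, lp.inner_single_right,
    ContinuousLinearMap.adjoint_inner_left]

end Stmt4Aux

set_option maxHeartbeats 1000000 in
open Stmt4Aux in
/-- If `π` is faithful, then the ideal `L` (the copy of
`K(ℓ²(ℕ²)) ⊗ A`) is an essential ideal of `C`: every `X ∈ C` with `X·L = {0}` is zero;
equivalently, every nonzero closed two-sided ideal of `C` meets `L` nontrivially. -/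
theorem stmt4
    {A : Type*} [NonUnitalNormedRing A] [StarRing A] [CStarRing A]
    [NormedSpace ℂ A] [IsScalarTower ℂ A A] [SMulCommClass ℂ A A] [StarModule ℂ A]
    [CompleteSpace A]
    {H : Type*} [NormedAddCommGroup H] [InnerProductSpace ℂ H] [CompleteSpace H]
    (α : ℕ × ℕ → (A ≃⋆ₐ[ℂ] A))
    (hα0 : ∀ a : A, α 0 a = a)
    (hαadd : ∀ s t : ℕ × ℕ, ∀ a : A, α (s + t) a = α s (α t a))
    (π : A →⋆ₙₐ[ℂ] (H →L[ℂ] H))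
    (hπnd : Dense (↑(Submodule.span ℂ {x : H | ∃ (a : A) (h : H), π a h = x}) : Set H))
    -- `π` is faithful:
    (hπinj : Function.Injective π)
    (πt : A → (lp (fun _ : ℕ × ℕ => H) 2 →L[ℂ] lp (fun _ : ℕ × ℕ => H) 2))
    (V : ℕ × ℕ → (lp (fun _ : ℕ × ℕ => H) 2 →L[ℂ] lp (fun _ : ℕ × ℕ => H) 2))
    (hπt : ∀ (a : A) (f : lp (fun _ : ℕ × ℕ => H) 2) (s : ℕ × ℕ),
      (πt a f) s = π (α s a) (f s))
    (hV : ∀ (t : ℕ × ℕ) (f : lp (fun _ : ℕ × ℕ => H) 2) (s : ℕ × ℕ),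
      (V t f) s = f (s + t))
    (ξ : A → ℕ × ℕ → ℕ × ℕ → (lp (fun _ : ℕ × ℕ => H) 2 →L[ℂ] lp (fun _ : ℕ × ℕ => H) 2))
    (hξ : ∀ (a : A) (u v : ℕ × ℕ), ξ a u v =
      ContinuousLinearMap.adjoint (V u) * πt a *
        (1 - ContinuousLinearMap.adjoint (V (1, 0)) * V (1, 0)) * V v)
    (C : StarSubalgebra ℂ (lp (fun _ : ℕ × ℕ => H) 2 →L[ℂ] lp (fun _ : ℕ × ℕ => H) 2))
    (hC : C = (StarAlgebra.adjoin ℂ (Set.range πt ∪ Set.range V)).topologicalClosure)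
    (L : Submodule ℂ (lp (fun _ : ℕ × ℕ => H) 2 →L[ℂ] lp (fun _ : ℕ × ℕ => H) 2))
    (hL : L = (Submodule.span ℂ
      {T | ∃ (a : A) (m n x y : ℕ),
        T = ξ a (m, n) (x, y) - ξ (α (0, 1) a) (m, n + 1) (x, y + 1)}).topologicalClosure) :
    -- `L` is essential in `C`: any `X ∈ C` annihilating `L` is zero;
    (∀ X ∈ C, (∀ T ∈ L, X * T = 0) → X = 0) ∧
    -- equivalently, every nonzero closed two-sided ideal of `C` meets `L` nontrivially:
    (∀ J : Submodule ℂ (lp (fun _ : ℕ × ℕ => H) 2 →L[ℂ] lp (fun _ : ℕ × ℕ => H) 2),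
      (∀ T ∈ J, T ∈ C) →
      IsClosed (J : Set (lp (fun _ : ℕ × ℕ => H) 2 →L[ℂ] lp (fun _ : ℕ × ℕ => H) 2)) →
      (∀ X ∈ C, ∀ T ∈ J, X * T ∈ J ∧ T * X ∈ J) →
      J ≠ ⊥ → ∃ T ∈ J, T ∈ L ∧ T ≠ 0) := by
  classical
  -- adjoint of `V t` is the forward shift
  have hadjV : ∀ t : ℕ × ℕ, ContinuousLinearMap.adjoint (V t) = Wop t :=
    fun t => Wop_eq_adjoint t (V t) (hV t)
  -- pointwise formula for ξ
  have hξapp : ∀ (a : A) (u v : ℕ × ℕ) (f : lp (fun _ : ℕ × ℕ => H) 2) (s : ℕ × ℕ),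
      (ξ a u v f) s =
        if u ≤ s ∧ (s - u).1 = 0 then π (α (s - u) a) (f (s - u + v)) else 0 := by
    intro a u v f s
    rw [hξ]
    simp only [ContinuousLinearMap.mul_apply]
    rw [hadjV, Wop_apply]
    by_cases h1 : u ≤ s
    · rw [if_pos h1, hπt]
      have hP : ((1 - ContinuousLinearMap.adjoint (V (1, 0)) * V (1, 0)) (V v f)) (s - u)
          = if (s - u).1 = 0 then f (s - u + v) else 0 := by
        simp only [ContinuousLinearMap.sub_apply, ContinuousLinearMap.one_apply,
          ContinuousLinearMap.mul_apply]
        rw [lp.coeFn_sub, Pi.sub_apply, hadjV, Wop_apply]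
        by_cases h2 : (s - u).1 = 0
        · have hnot : ¬ ((1, 0) : ℕ × ℕ) ≤ s - u := by
            simp [Prod.le_def, h2]
          rw [if_neg hnot, if_pos h2, hV, sub_zero]
        · have hle : ((1, 0) : ℕ × ℕ) ≤ s - u :=
            ⟨Nat.one_le_iff_ne_zero.2 h2, Nat.zero_le _⟩
          rw [if_pos hle, if_neg h2, hV (1, 0), prod_sub_add_cancel hle, hV, sub_self]
      rw [hP]
      by_cases h2 : (s - u).1 = 0
      · rw [if_pos h2, if_pos ⟨h1, h2⟩]
      · rw [if_neg h2, if_neg (by tauto), map_zero]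
    · rw [if_neg h1, if_neg (by tauto)]
  -- the generators of `L` are the "matrix unit" rank-one operators
  have hDiff : ∀ (a : A) (m n x y : ℕ),
      ξ a (m, n) (x, y) - ξ (α (0, 1) a) (m, n + 1) (x, y + 1)
        = rankOne (π a) (m, n) (x, y) := by
    intro a m n x y
    refine ContinuousLinearMap.ext fun f => ?_
    apply lp.ext; funext s
    obtain ⟨p, q⟩ := s
    rw [ContinuousLinearMap.sub_apply, lp.coeFn_sub, Pi.sub_apply, hξapp, hξapp,
      rankOne_apply]
    simp only [Prod.mk_sub_mk, Prod.mk_add_mk, Prod.mk_le_mk, Prod.mk.injEq]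
    split_ifs with h1 h2 h3 h3 h2 h3 h3
    · exfalso; omega
    · -- both ξ terms present, they cancel
      have e : ((p - m, q - (n + 1)) : ℕ × ℕ) + ((0, 1) : ℕ × ℕ) = (p - m, q - n) := by
        simp only [Prod.mk_add_mk, Prod.mk.injEq]
        omega
      rw [← hαadd, e]
      have e2 : q - (n + 1) + (y + 1) = q - n + y := by omega
      rw [e2, sub_self]
    · -- only the first ξ term: the diagonal
      obtain ⟨⟨hmp, hnq⟩, hpm⟩ := h1
      have e0 : ((p - m, q - n) : ℕ × ℕ) = (0 : ℕ × ℕ) := by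
        rw [show (0 : ℕ × ℕ) = ((0 : ℕ), (0 : ℕ)) from rfl, Prod.mk.injEq]
        exact ⟨by omega, by omega⟩
      have ef : ((p - m + x, q - n + y) : ℕ × ℕ) = (x, y) := by
        rw [Prod.mk.injEq]
        exact ⟨by omega, by omega⟩
      rw [sub_zero, e0, hα0, ef]
    · exfalso; omega
    · exfalso; omega
    · exfalso; omega
    · exfalso; omega
    · simp
  -- notation for the generating set of L
  set genSet : Set (lp (fun _ : ℕ × ℕ => H) 2 →L[ℂ] lp (fun _ : ℕ × ℕ => H) 2) :=
    {T | ∃ (a : A) (m n x y : ℕ),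
        T = ξ a (m, n) (x, y) - ξ (α (0, 1) a) (m, n + 1) (x, y + 1)} with hgenSet
  have hgen_mem : ∀ (a : A) (m n x y : ℕ), rankOne (π a) (m, n) (x, y) ∈ genSet :=
    fun a m n x y => ⟨a, m, n, x, y, (hDiff a m n x y).symm⟩
  have hLset : (L : Set _) = closure (↑(Submodule.span ℂ genSet) : Set ((lp (fun _ : ℕ × ℕ => H) 2) →L[ℂ] lp (fun _ : ℕ × ℕ => H) 2)) := by
    rw [hL, Submodule.topologicalClosure_coe]
  have hgenL : ∀ (a : A) (m n x y : ℕ), rankOne (π a) (m, n) (x, y) ∈ L := by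
    intro a m n x y
    rw [hL]
    exact Submodule.le_topologicalClosure _
      (Submodule.subset_span (hgen_mem a m n x y))
  have hLclosed : IsClosed (L : Set ((lp (fun _ : ℕ × ℕ => H) 2) →L[ℂ] lp (fun _ : ℕ × ℕ => H) 2)) := by
    rw [hL]; exact Submodule.isClosed_topologicalClosure _
  -- membership in C of the basic operators
  have hVC : ∀ t, V t ∈ C := by
    intro t
    rw [hC]
    exact StarSubalgebra.le_topologicalClosure _
      (StarAlgebra.subset_adjoin ℂ _ (Or.inr ⟨t, rfl⟩))
  have hπtC : ∀ a, πt a ∈ C := by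
    intro a
    rw [hC]
    exact StarSubalgebra.le_topologicalClosure _
      (StarAlgebra.subset_adjoin ℂ _ (Or.inl ⟨a, rfl⟩))
  have hadjVC : ∀ t, ContinuousLinearMap.adjoint (V t) ∈ C := by
    intro t
    rw [← ContinuousLinearMap.star_eq_adjoint]
    exact star_mem (hVC t)
  have hξC : ∀ (a : A) (u v : ℕ × ℕ), ξ a u v ∈ C := by
    intro a u v
    rw [hξ]
    exact mul_mem (mul_mem (mul_mem (hadjVC u) (hπtC a))
      (sub_mem (one_mem C) (mul_mem (hadjVC (1, 0)) (hVC (1, 0))))) (hVC v)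
  have hrankC : ∀ (a : A) (m n x y : ℕ), rankOne (π a) (m, n) (x, y) ∈ C := by
    intro a m n x y
    rw [← hDiff]
    exact sub_mem (hξC _ _ _) (hξC _ _ _)
  have hLC : ∀ T ∈ L, T ∈ C := by
    intro T hT
    have hCclosed : IsClosed (C : Set ((lp (fun _ : ℕ × ℕ => H) 2) →L[ℂ] lp (fun _ : ℕ × ℕ => H) 2)) := by
      rw [hC]; exact StarSubalgebra.isClosed_topologicalClosure _
    have hspan : (↑(Submodule.span ℂ genSet) : Set ((lp (fun _ : ℕ × ℕ => H) 2) →L[ℂ] lp (fun _ : ℕ × ℕ => H) 2)) ⊆ (C : Set ((lp (fun _ : ℕ × ℕ => H) 2) →L[ℂ] lp (fun _ : ℕ × ℕ => H) 2)) := by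
      intro S hS
      induction hS using Submodule.span_induction with
      | mem x h =>
        obtain ⟨a, m, n, x', y', rfl⟩ := h
        exact sub_mem (hξC _ _ _) (hξC _ _ _)
      | zero => exact zero_mem C
      | add x y _ _ hx hy => exact add_mem hx hy
      | smul c x _ hx =>
        rw [Algebra.smul_def]
        exact mul_mem (algebraMap_mem C c) hx
    have hT' : T ∈ closure (↑(Submodule.span ℂ genSet) :
        Set ((lp (fun _ : ℕ × ℕ => H) 2) →L[ℂ] lp (fun _ : ℕ × ℕ => H) 2)) := by
      have h0 : T ∈ (L : Set ((lp (fun _ : ℕ × ℕ => H) 2) →L[ℂ] lp (fun _ : ℕ × ℕ => H) 2)) := hT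
      rwa [hLset] at h0
    exact closure_minimal hspan hCclosed hT'
  -- Key step 1: an operator annihilating all the rank one generators is zero
  have key1 : ∀ X : lp (fun _ : ℕ × ℕ => H) 2 →L[ℂ] lp (fun _ : ℕ × ℕ => H) 2,
      (∀ (a : A) (m n x y : ℕ), X * rankOne (π a) (m, n) (x, y) = 0) → X = 0 := by
    intro X hX
    have hsingle : ∀ (i : ℕ × ℕ) (v : H), X (lp.single 2 i v) = 0 := by
      rintro ⟨m, n⟩ v
      set Y : H →L[ℂ] lp (fun _ : ℕ × ℕ => H) 2 := X ∘L singleCLM (m, n) with hY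
      have hY0 : ∀ (a : A) (h : H), Y (π a h) = 0 := by
        intro a h
        have h1 : singleCLM (m, n) (π a h)
            = rankOne (π a) (m, n) ((0 : ℕ), (0 : ℕ)) (lp.single 2 ((0 : ℕ), (0 : ℕ)) h) := by
          rw [rankOne_eq_single]
          have harg : (lp.single 2 ((0 : ℕ), (0 : ℕ)) h :
              lp (fun _ : ℕ × ℕ => H) 2) ((0 : ℕ), (0 : ℕ)) = h := by
            rw [single_apply']; simp
          rw [harg]
          rfl
        show X (singleCLM (m, n) (π a h)) = 0
        rw [h1, ← ContinuousLinearMap.mul_apply, hX, ContinuousLinearMap.zero_apply]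
      have hker : ∀ w : H, Y w = 0 := by
        intro w
        have h1 : Submodule.span ℂ {x : H | ∃ (a : A) (h : H), π a h = x}
            ≤ LinearMap.ker (Y : H →ₗ[ℂ] lp (fun _ : ℕ × ℕ => H) 2) := by
          apply Submodule.span_le.2
          rintro x ⟨a, h, rfl⟩
          exact LinearMap.mem_ker.2 (hY0 a h)
        have hclosed : IsClosed ((LinearMap.ker (Y : H →ₗ[ℂ] lp (fun _ : ℕ × ℕ => H) 2) :
            Submodule ℂ H) : Set H) := ContinuousLinearMap.isClosed_ker Y
        have hw : w ∈ closure ((Submodule.span ℂ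
            {x : H | ∃ (a : A) (h : H), π a h = x} : Submodule ℂ H) : Set H) := hπnd w
        have hw2 : w ∈ closure ((LinearMap.ker (Y : H →ₗ[ℂ] lp (fun _ : ℕ × ℕ => H) 2) : Submodule ℂ H) : Set H) :=
          closure_mono (fun z hz => h1 hz) hw
        exact LinearMap.mem_ker.1 (hclosed.closure_subset hw2)
      exact hker v
    haveI : Fact ((1 : ℝ≥0∞) ≤ 2) := ⟨one_le_two⟩
    refine ContinuousLinearMap.ext fun f => ?_
    have hsum : HasSum (fun i : ℕ × ℕ => lp.single 2 i (f i)) f :=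
      lp.hasSum_single (by norm_num) f
    have hsum2 := hsum.mapL X
    have hzero : ∀ i : ℕ × ℕ, X (lp.single 2 i (f i)) = 0 := fun i => hsingle i (f i)
    have hz : HasSum (fun _ : ℕ × ℕ => (0 : lp (fun _ : ℕ × ℕ => H) 2)) (X f) := by
      simpa [hzero] using hsum2
    rw [ContinuousLinearMap.zero_apply]
    exact hz.unique hasSum_zero

  -- `L` is star-closed
  have hstar_rank : ∀ (a : A) (m n x y : ℕ),
      star (rankOne (π a) (m, n) (x, y)) = rankOne (π (star a)) (x, y) (m, n) := by
    intro a m n x y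
    rw [ContinuousLinearMap.star_eq_adjoint, adjoint_rankOne,
      ← ContinuousLinearMap.star_eq_adjoint, ← map_star]
  have hLstar : ∀ T ∈ L, star T ∈ L := by
    intro T hT
    have hsub : (↑(Submodule.span ℂ genSet) : Set ((lp (fun _ : ℕ × ℕ => H) 2) →L[ℂ] lp (fun _ : ℕ × ℕ => H) 2)) ⊆ {S : ((lp (fun _ : ℕ × ℕ => H) 2) →L[ℂ] lp (fun _ : ℕ × ℕ => H) 2) | star S ∈ L} := by
      intro S hS
      induction hS using Submodule.span_induction with
      | mem w h =>
          obtain ⟨a, m, n, x', y', rfl⟩ := h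
          show star _ ∈ L
          rw [hDiff, hstar_rank]
          exact hgenL _ _ _ _ _
      | zero => show star (0 : ((lp (fun _ : ℕ × ℕ => H) 2) →L[ℂ] lp (fun _ : ℕ × ℕ => H) 2)) ∈ L; rw [star_zero]; exact L.zero_mem
      | add u w _ _ hu hw => show star (u + w) ∈ L; rw [star_add]; exact L.add_mem hu hw
      | smul c w _ hw => show star (c • w) ∈ L; rw [star_smul]; exact L.smul_mem _ hw
    have hclosed2 : IsClosed {S : ((lp (fun _ : ℕ × ℕ => H) 2) →L[ℂ] lp (fun _ : ℕ × ℕ => H) 2) | star S ∈ L} :=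
      hLclosed.preimage continuous_star
    have hT' : T ∈ closure (↑(Submodule.span ℂ genSet) : Set ((lp (fun _ : ℕ × ℕ => H) 2) →L[ℂ] lp (fun _ : ℕ × ℕ => H) 2)) := by
      have h0 : T ∈ (L : Set ((lp (fun _ : ℕ × ℕ => H) 2) →L[ℂ] lp (fun _ : ℕ × ℕ => H) 2)) := hT
      rwa [hLset] at h0
    exact closure_minimal hsub hclosed2 hT'
  -- products of generators of `C` with the rank-one operators
  have hmul_pt_rank : ∀ (b a : A) (m n x y : ℕ),
      πt b * rankOne (π a) (m, n) (x, y) = rankOne (π (α (m, n) b * a)) (m, n) (x, y) := by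
    intro b a m n x y
    refine ContinuousLinearMap.ext fun f => ?_
    apply lp.ext; funext s
    rw [ContinuousLinearMap.mul_apply, hπt, rankOne_apply, rankOne_apply]
    by_cases h : s = ((m, n) : ℕ × ℕ)
    · subst h
      rw [if_pos rfl, if_pos rfl, map_mul, ContinuousLinearMap.mul_apply]
    · rw [if_neg h, if_neg h, map_zero]
  have hmul_rank_pt : ∀ (a b : A) (m n x y : ℕ),
      rankOne (π a) (m, n) (x, y) * πt b = rankOne (π (a * α (x, y) b)) (m, n) (x, y) := by
    intro a b m n x y
    refine ContinuousLinearMap.ext fun f => ?_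
    apply lp.ext; funext s
    rw [ContinuousLinearMap.mul_apply, rankOne_apply, rankOne_apply]
    by_cases h : s = ((m, n) : ℕ × ℕ)
    · subst h
      rw [if_pos rfl, if_pos rfl, hπt, map_mul, ContinuousLinearMap.mul_apply]
    · rw [if_neg h, if_neg h]
  have hmul_rank_V : ∀ (a : A) (m n x y : ℕ) (t : ℕ × ℕ),
      rankOne (π a) (m, n) (x, y) * V t = rankOne (π a) (m, n) ((x, y) + t) := by
    intro a m n x y t
    refine ContinuousLinearMap.ext fun f => ?_
    apply lp.ext; funext s
    rw [ContinuousLinearMap.mul_apply, rankOne_apply, rankOne_apply]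
    by_cases h : s = ((m, n) : ℕ × ℕ)
    · subst h
      rw [if_pos rfl, if_pos rfl, hV]
    · rw [if_neg h, if_neg h]
  have hmul_V_rank_le : ∀ (a : A) (m n x y : ℕ) (t : ℕ × ℕ), t ≤ ((m, n) : ℕ × ℕ) →
      V t * rankOne (π a) (m, n) (x, y) = rankOne (π a) ((m, n) - t) (x, y) := by
    intro a m n x y t ht
    refine ContinuousLinearMap.ext fun f => ?_
    apply lp.ext; funext s
    rw [ContinuousLinearMap.mul_apply, hV, rankOne_apply, rankOne_apply]
    by_cases h : s = ((m, n) : ℕ × ℕ) - t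
    · subst h
      rw [if_pos (prod_sub_add_cancel ht), if_pos rfl]
    · have h2 : ¬ (s + t = ((m, n) : ℕ × ℕ)) := by
        intro hc
        apply h
        rw [← hc, prod_add_sub_cancel]
      rw [if_neg h2, if_neg h]
  have hmul_V_rank_not : ∀ (a : A) (m n x y : ℕ) (t : ℕ × ℕ), ¬ t ≤ ((m, n) : ℕ × ℕ) →
      V t * rankOne (π a) (m, n) (x, y) = 0 := by
    intro a m n x y t ht
    refine ContinuousLinearMap.ext fun f => ?_
    apply lp.ext; funext s
    rw [ContinuousLinearMap.mul_apply, hV, rankOne_apply]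
    have h2 : ¬ (s + t = ((m, n) : ℕ × ℕ)) := by
      intro hc
      apply ht
      rw [← hc]
      exact le_add_self
    rw [if_neg h2, ContinuousLinearMap.zero_apply]
    rw [lp.coeFn_zero]
    rfl
  -- the ideal property for `L`
  have hidealL : ∀ X ∈ C, ∀ T ∈ L, X * T ∈ L ∧ T * X ∈ L := by
    have hgenM : ∀ X : ((lp (fun _ : ℕ × ℕ => H) 2) →L[ℂ] lp (fun _ : ℕ × ℕ => H) 2), (∀ (a : A) (m n x y : ℕ),
        X * rankOne (π a) (m, n) (x, y) ∈ L ∧ rankOne (π a) (m, n) (x, y) * X ∈ L) →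
        ∀ T ∈ L, X * T ∈ L ∧ T * X ∈ L := by
      intro X hXgen T hT
      have hsub : (↑(Submodule.span ℂ genSet) : Set ((lp (fun _ : ℕ × ℕ => H) 2) →L[ℂ] lp (fun _ : ℕ × ℕ => H) 2)) ⊆
          {S : ((lp (fun _ : ℕ × ℕ => H) 2) →L[ℂ] lp (fun _ : ℕ × ℕ => H) 2) | X * S ∈ L ∧ S * X ∈ L} := by
        intro S hS
        induction hS using Submodule.span_induction with
        | mem w h =>
            obtain ⟨a, m, n, x', y', rfl⟩ := h
            constructor
            · show X * _ ∈ L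
              rw [hDiff]
              exact (hXgen a m n x' y').1
            · show _ * X ∈ L
              rw [hDiff]
              exact (hXgen a m n x' y').2
        | zero =>
            constructor
            · show X * (0 : ((lp (fun _ : ℕ × ℕ => H) 2) →L[ℂ] lp (fun _ : ℕ × ℕ => H) 2)) ∈ L; rw [mul_zero]; exact L.zero_mem
            · show (0 : ((lp (fun _ : ℕ × ℕ => H) 2) →L[ℂ] lp (fun _ : ℕ × ℕ => H) 2)) * X ∈ L; rw [zero_mul]; exact L.zero_mem
        | add u w _ _ hu hw =>
            constructor
            · show X * (u + w) ∈ L; rw [mul_add]; exact L.add_mem hu.1 hw.1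
            · show (u + w) * X ∈ L; rw [add_mul]; exact L.add_mem hu.2 hw.2
        | smul c w _ hw =>
            constructor
            · show X * (c • w) ∈ L; rw [mul_smul_comm]; exact L.smul_mem _ hw.1
            · show (c • w) * X ∈ L; rw [smul_mul_assoc]; exact L.smul_mem _ hw.2
      have hcl : IsClosed {S : ((lp (fun _ : ℕ × ℕ => H) 2) →L[ℂ] lp (fun _ : ℕ × ℕ => H) 2) | X * S ∈ L ∧ S * X ∈ L} := by
        have h1 : IsClosed {S : ((lp (fun _ : ℕ × ℕ => H) 2) →L[ℂ] lp (fun _ : ℕ × ℕ => H) 2) | X * S ∈ L} :=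
          hLclosed.preimage (continuous_const.mul continuous_id)
        have h2 : IsClosed {S : ((lp (fun _ : ℕ × ℕ => H) 2) →L[ℂ] lp (fun _ : ℕ × ℕ => H) 2) | S * X ∈ L} :=
          hLclosed.preimage (continuous_id.mul continuous_const)
        exact h1.inter h2
      have hT' : T ∈ closure (↑(Submodule.span ℂ genSet) : Set ((lp (fun _ : ℕ × ℕ => H) 2) →L[ℂ] lp (fun _ : ℕ × ℕ => H) 2)) := by
        have h0 : T ∈ (L : Set ((lp (fun _ : ℕ × ℕ => H) 2) →L[ℂ] lp (fun _ : ℕ × ℕ => H) 2)) := hT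
        rwa [hLset] at h0
      exact closure_minimal hsub hcl hT'
    set P : ((lp (fun _ : ℕ × ℕ => H) 2) →L[ℂ] lp (fun _ : ℕ × ℕ => H) 2) → Prop := fun X => ∀ T ∈ L, X * T ∈ L ∧ T * X ∈ L with hP
    have hP_pt : ∀ b : A, P (πt b) := by
      intro b
      apply hgenM
      intro a m n x y
      constructor
      · rw [hmul_pt_rank]; exact hgenL _ _ _ _ _
      · rw [hmul_rank_pt]; exact hgenL _ _ _ _ _
    have hP_V : ∀ t : ℕ × ℕ, P (V t) := by
      intro t
      apply hgenM
      intro a m n x y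
      constructor
      · by_cases ht : t ≤ ((m, n) : ℕ × ℕ)
        · rw [hmul_V_rank_le a m n x y t ht]
          obtain ⟨m', n'⟩ := ((m, n) : ℕ × ℕ) - t
          exact hgenL _ _ _ _ _
        · rw [hmul_V_rank_not a m n x y t ht]
          exact L.zero_mem
      · rw [hmul_rank_V]
        obtain ⟨x', y'⟩ := ((x, y) : ℕ × ℕ) + t
        exact hgenL _ _ _ _ _
    have hP_star : ∀ X : ((lp (fun _ : ℕ × ℕ => H) 2) →L[ℂ] lp (fun _ : ℕ × ℕ => H) 2), P X → P (star X) := by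
      intro X hX T hT
      constructor
      · have : star X * T = star (star T * X) := by
          rw [star_mul, star_star]
        rw [this]
        exact hLstar _ ((hX (star T) (hLstar T hT)).2)
      · have : T * star X = star (X * star T) := by
          rw [star_mul, star_star]
        rw [this]
        exact hLstar _ ((hX (star T) (hLstar T hT)).1)
    have hadjsub : (↑(StarAlgebra.adjoin ℂ (Set.range πt ∪ Set.range V)) : Set ((lp (fun _ : ℕ × ℕ => H) 2) →L[ℂ] lp (fun _ : ℕ × ℕ => H) 2))
        ⊆ {X : ((lp (fun _ : ℕ × ℕ => H) 2) →L[ℂ] lp (fun _ : ℕ × ℕ => H) 2) | P X} := by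
      intro X hX
      induction hX using StarAlgebra.adjoin_induction with
      | mem w h =>
          rcases h with ⟨b, rfl⟩ | ⟨t, rfl⟩
          · exact hP_pt b
          · exact hP_V t
      | algebraMap r =>
          intro T hT
          constructor
          · rw [Algebra.algebraMap_eq_smul_one, smul_mul_assoc, one_mul]
            exact L.smul_mem _ hT
          · rw [Algebra.algebraMap_eq_smul_one, mul_smul_comm, mul_one]
            exact L.smul_mem _ hT
      | add u w _ _ hu hw =>
          intro T hT
          constructor
          · rw [add_mul]; exact L.add_mem ((hu T hT).1) ((hw T hT).1)
          · rw [mul_add]; exact L.add_mem ((hu T hT).2) ((hw T hT).2)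
      | mul u w _ _ hu hw =>
          intro T hT
          constructor
          · rw [mul_assoc]; exact (hu _ ((hw T hT).1)).1
          · rw [← mul_assoc]; exact (hw _ ((hu T hT).2)).2
      | star u _ hu => exact hP_star u hu
    have hPclosed : IsClosed {X : ((lp (fun _ : ℕ × ℕ => H) 2) →L[ℂ] lp (fun _ : ℕ × ℕ => H) 2) | P X} := by
      have heq : {X : ((lp (fun _ : ℕ × ℕ => H) 2) →L[ℂ] lp (fun _ : ℕ × ℕ => H) 2) | P X} = ⋂ T ∈ (L : Set ((lp (fun _ : ℕ × ℕ => H) 2) →L[ℂ] lp (fun _ : ℕ × ℕ => H) 2)), {X : ((lp (fun _ : ℕ × ℕ => H) 2) →L[ℂ] lp (fun _ : ℕ × ℕ => H) 2) | X * T ∈ L ∧ T * X ∈ L} := by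
        ext X
        simp only [Set.mem_iInter, Set.mem_setOf_eq, hP, SetLike.mem_coe]
      rw [heq]
      refine isClosed_biInter fun T hT => ?_
      have h1 : IsClosed {X : ((lp (fun _ : ℕ × ℕ => H) 2) →L[ℂ] lp (fun _ : ℕ × ℕ => H) 2) | X * T ∈ L} :=
        hLclosed.preimage (continuous_id.mul continuous_const)
      have h2 : IsClosed {X : ((lp (fun _ : ℕ × ℕ => H) 2) →L[ℂ] lp (fun _ : ℕ × ℕ => H) 2) | T * X ∈ L} :=
        hLclosed.preimage (continuous_const.mul continuous_id)
      exact h1.inter h2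
    intro X hXC
    have hX' : X ∈ closure (↑(StarAlgebra.adjoin ℂ (Set.range πt ∪ Set.range V)) : Set ((lp (fun _ : ℕ × ℕ => H) 2) →L[ℂ] lp (fun _ : ℕ × ℕ => H) 2)) := by
      have h0 : X ∈ (C : Set ((lp (fun _ : ℕ × ℕ => H) 2) →L[ℂ] lp (fun _ : ℕ × ℕ => H) 2)) := hXC
      rw [hC] at h0
      rwa [← StarSubalgebra.topologicalClosure_coe]
    exact closure_minimal hadjsub hPclosed hX'
  constructor
  · -- part 1
    intro X _ hann
    apply key1
    intro a m n x y
    exact hann _ (hgenL a m n x y)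
  · -- part 2
    intro J hJC hJclosed hJideal hJne
    obtain ⟨T0, hT0J, hT0ne⟩ := (Submodule.ne_bot_iff J).1 hJne
    have hex : ∃ (a : A) (m n x y : ℕ), T0 * rankOne (π a) (m, n) (x, y) ≠ 0 := by
      by_contra hcon
      push_neg at hcon
      exact hT0ne (key1 T0 hcon)
    obtain ⟨a, m, n, x, y, hne⟩ := hex
    refine ⟨T0 * rankOne (π a) (m, n) (x, y), ?_, ?_, hne⟩
    · exact (hJideal _ (hrankC a m n x y) T0 hT0J).2
    · exact (hidealL T0 (hJC T0 hT0J) _ (hgenL a m n x y)).1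
end
end

section
/- Suppose A ≠ 0 and π is faithful. Then L is a nonzero proper closed two-sided ideal of C (in particular, 1 = V₀ ∈ C but 1 ∉ L); hence C, i.e., the partial-isometric crossed product A ×^piso_α ℕ², is not simple. -/
set_option maxHeartbeats 1000000


open scoped ENNReal

noncomputable section

/-- If `A ≠ 0` and `π` is faithful, then `L` is a nonzero proper closed
two-sided ideal of `C` (in particular `1 = V₀ ∈ C` but `1 ∉ L`); hence the
partial-isometric crossed product `C ≅ A ×^piso_α ℕ²` is not simple. -/
theorem stmt5
    {A : Type*} [NonUnitalNormedRing A] [StarRing A] [CStarRing A]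
    [NormedSpace ℂ A] [IsScalarTower ℂ A A] [SMulCommClass ℂ A A] [StarModule ℂ A]
    [CompleteSpace A]
    {H : Type*} [NormedAddCommGroup H] [InnerProductSpace ℂ H] [CompleteSpace H]
    (α : ℕ × ℕ → (A ≃⋆ₐ[ℂ] A))
    (hα0 : ∀ a : A, α 0 a = a)
    (hαadd : ∀ s t : ℕ × ℕ, ∀ a : A, α (s + t) a = α s (α t a))
    (π : A →⋆ₙₐ[ℂ] (H →L[ℂ] H))
    (hπnd : Dense (↑(Submodule.span ℂ {x : H | ∃ (a : A) (h : H), π a h = x}) : Set H))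
    -- `A` is nonzero and `π` is faithful:
    (hA : ∃ a : A, a ≠ 0)
    (hπinj : Function.Injective π)
    (πt : A → (lp (fun _ : ℕ × ℕ => H) 2 →L[ℂ] lp (fun _ : ℕ × ℕ => H) 2))
    (V : ℕ × ℕ → (lp (fun _ : ℕ × ℕ => H) 2 →L[ℂ] lp (fun _ : ℕ × ℕ => H) 2))
    (hπt : ∀ (a : A) (f : lp (fun _ : ℕ × ℕ => H) 2) (s : ℕ × ℕ),
      (πt a f) s = π (α s a) (f s))
    (hV : ∀ (t : ℕ × ℕ) (f : lp (fun _ : ℕ × ℕ => H) 2) (s : ℕ × ℕ),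
      (V t f) s = f (s + t))
    (ξ : A → ℕ × ℕ → ℕ × ℕ → (lp (fun _ : ℕ × ℕ => H) 2 →L[ℂ] lp (fun _ : ℕ × ℕ => H) 2))
    (hξ : ∀ (a : A) (u v : ℕ × ℕ), ξ a u v =
      ContinuousLinearMap.adjoint (V u) * πt a *
        (1 - ContinuousLinearMap.adjoint (V (1, 0)) * V (1, 0)) * V v)
    (C : StarSubalgebra ℂ (lp (fun _ : ℕ × ℕ => H) 2 →L[ℂ] lp (fun _ : ℕ × ℕ => H) 2))
    (hC : C = (StarAlgebra.adjoin ℂ (Set.range πt ∪ Set.range V)).topologicalClosure)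
    (L : Submodule ℂ (lp (fun _ : ℕ × ℕ => H) 2 →L[ℂ] lp (fun _ : ℕ × ℕ => H) 2))
    (hL : L = (Submodule.span ℂ
      {T | ∃ (a : A) (m n x y : ℕ),
        T = ξ a (m, n) (x, y) - ξ (α (0, 1) a) (m, n + 1) (x, y + 1)}).topologicalClosure)
    -- `L` is a closed two-sided ideal of `C`:
    (hLC : ∀ T ∈ L, T ∈ C)
    (hLideal : ∀ X ∈ C, ∀ T ∈ L, X * T ∈ L ∧ T * X ∈ L) :
    -- `1 = V₀` belongs to `C` but not to `L`, and `L` is nonzero; so `L` is a nonzero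
    -- proper closed two-sided ideal of `C`:
    V 0 = 1 ∧
    (1 : lp (fun _ : ℕ × ℕ => H) 2 →L[ℂ] lp (fun _ : ℕ × ℕ => H) 2) ∈ C ∧
    (1 : lp (fun _ : ℕ × ℕ => H) 2 →L[ℂ] lp (fun _ : ℕ × ℕ => H) 2) ∉ L ∧
    L ≠ ⊥ ∧
    (∃ X ∈ C, X ∉ L) ∧
    -- hence `C` is not simple: it has a closed two-sided ideal that is neither zero
    -- nor all of `C`:
    (∃ J : Submodule ℂ (lp (fun _ : ℕ × ℕ => H) 2 →L[ℂ] lp (fun _ : ℕ × ℕ => H) 2),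
      (∀ T ∈ J, T ∈ C) ∧
      IsClosed (J : Set (lp (fun _ : ℕ × ℕ => H) 2 →L[ℂ] lp (fun _ : ℕ × ℕ => H) 2)) ∧
      (∀ X ∈ C, ∀ T ∈ J, X * T ∈ J ∧ T * X ∈ J) ∧
      J ≠ ⊥ ∧ ¬ (∀ X ∈ C, X ∈ J)) := by
  classical
  -- `V 0 = 1`
  have hV0 : V 0 = 1 := by
    ext f : 1
    apply lp.ext
    funext s
    rw [hV, add_zero, ContinuousLinearMap.one_apply]
  have h1C : (1 : lp (fun _ : ℕ × ℕ => H) 2 →L[ℂ] lp (fun _ : ℕ × ℕ => H) 2) ∈ C := by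
    rw [hC, ← hV0]
    exact (StarAlgebra.adjoin ℂ _).le_topologicalClosure
      (StarAlgebra.subset_adjoin ℂ _ (Or.inr ⟨0, rfl⟩))
  -- basic computations on point masses
  have hVs : ∀ (t i : ℕ × ℕ) (x : H), V t (lp.single 2 (i + t) x) = lp.single 2 i x := by
    intro t i x
    apply lp.ext
    funext s
    rw [hV]
    by_cases h : s = i
    · subst h
      rw [lp.single_apply_self, lp.single_apply_self]
    · rw [lp.single_apply_ne _ _ _ h,
        lp.single_apply_ne _ _ _ (fun hc => h (add_right_cancel hc))]
  have hVz : ∀ (t j : ℕ × ℕ) (x : H), (∀ s : ℕ × ℕ, s + t ≠ j) →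
      V t (lp.single 2 j x) = 0 := by
    intro t j x hj
    apply lp.ext
    funext s
    rw [hV, lp.single_apply_ne _ _ _ (hj s)]
    simp
  have hπs : ∀ (a : A) (i : ℕ × ℕ) (x : H),
      πt a (lp.single 2 i x) = lp.single 2 i (π (α i a) x) := by
    intro a i x
    apply lp.ext
    funext s
    rw [hπt]
    by_cases h : s = i
    · subst h
      rw [lp.single_apply_self, lp.single_apply_self]
    · rw [lp.single_apply_ne _ _ _ h, lp.single_apply_ne _ _ _ h, map_zero]
  have hPs : ∀ (q : ℕ) (x : H),
      (1 - ContinuousLinearMap.adjoint (V (1, 0)) * V (1, 0)) (lp.single 2 ((0 : ℕ), q) x)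
        = lp.single 2 ((0 : ℕ), q) x := by
    intro q x
    have h0 : V (1, 0) (lp.single 2 ((0 : ℕ), q) x) = 0 :=
      hVz _ _ _ (fun s hs => by simpa using congrArg Prod.fst hs)
    rw [ContinuousLinearMap.sub_apply, ContinuousLinearMap.one_apply,
      ContinuousLinearMap.mul_apply, h0, map_zero, sub_zero]
  -- inner products of ξ against point masses on the zeroth column
  have hxi : ∀ (a : A) (m n x y q : ℕ) (h₀ : H), n ≤ q → y ≤ q →
      (inner ℂ (ξ a (m, n) (x, y) (lp.single 2 ((0 : ℕ), q) h₀)) (lp.single 2 ((0 : ℕ), q) h₀) : ℂ)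
        = if x = 0 ∧ m = 0 ∧ n = y then (inner ℂ (π (α ((0 : ℕ), q - n) a) h₀) h₀ : ℂ) else 0 := by
    intro a m n x y q h₀ hnq hyq
    rw [hξ]
    simp only [ContinuousLinearMap.mul_apply]
    by_cases hx : x = 0
    · subst hx
      have hv : V (0, y) (lp.single 2 ((0 : ℕ), q) h₀) = lp.single 2 ((0 : ℕ), q - y) h₀ := by
        have he : ((0 : ℕ), q) = ((0 : ℕ), q - y) + (0, y) := by
          simp [Prod.ext_iff, Nat.sub_add_cancel hyq]
        rw [he, hVs]
      rw [hv, hPs, hπs, ContinuousLinearMap.adjoint_inner_left]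
      by_cases hm : m = 0
      · subst hm
        have hu : V (0, n) (lp.single 2 ((0 : ℕ), q) h₀) = lp.single 2 ((0 : ℕ), q - n) h₀ := by
          have he : ((0 : ℕ), q) = ((0 : ℕ), q - n) + (0, n) := by
            simp [Prod.ext_iff, Nat.sub_add_cancel hnq]
          rw [he, hVs]
        rw [hu, lp.inner_single_left]
        by_cases hny : n = y
        · subst hny
          rw [lp.single_apply_self, if_pos ⟨rfl, rfl, rfl⟩]
        · have hne : ((0 : ℕ), q - n) ≠ ((0 : ℕ), q - y) := by
            simp only [ne_eq, Prod.mk.injEq, true_and]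
            omega
          rw [lp.single_apply_ne _ _ _ hne.symm, inner_zero_right,
            if_neg (fun h => hny h.2.2)]
      · have hu : V (m, n) (lp.single 2 ((0 : ℕ), q) h₀) = 0 := by
          refine hVz _ _ _ (fun s hs => ?_)
          have := congrArg Prod.fst hs
          simp only [Prod.fst_add] at this
          omega
        rw [hu, inner_zero_right, if_neg (fun h => hm h.2.1)]
    · have hv : V (x, y) (lp.single 2 ((0 : ℕ), q) h₀) = 0 := by
        refine hVz _ _ _ (fun s hs => ?_)
        have := congrArg Prod.fst hs
        simp only [Prod.fst_add] at this
        omega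
      rw [hv, map_zero, map_zero, map_zero, inner_zero_left, if_neg (fun h => hx h.1)]
  -- the generators are killed by the vector states at `(0,q)` for large `q`
  have hgen : ∀ (a : A) (m n x y : ℕ) (h₀ : H) (q : ℕ), n < q → y < q →
      (inner ℂ ((ξ a (m, n) (x, y) - ξ (α (0, 1) a) (m, n + 1) (x, y + 1))
          (lp.single 2 ((0 : ℕ), q) h₀)) (lp.single 2 ((0 : ℕ), q) h₀) : ℂ) = 0 := by
    intro a m n x y h₀ q hn hy
    rw [ContinuousLinearMap.sub_apply, inner_sub_left,
      hxi a m n x y q h₀ hn.le hy.le,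
      hxi (α (0, 1) a) m (n + 1) x (y + 1) q h₀ hn hy]
    by_cases hc : x = 0 ∧ m = 0 ∧ n = y
    · obtain ⟨hx0, hm0, hny⟩ := hc
      rw [if_pos ⟨hx0, hm0, hny⟩, if_pos ⟨hx0, hm0, by rw [hny]⟩]
      have hq1 : ((0 : ℕ), q - (n + 1)) + ((0 : ℕ), 1) = ((0 : ℕ), q - n) := by
        have hsub : q - (n + 1) + 1 = q - n := by omega
        simp [Prod.ext_iff, hsub]
      have hcomp : α ((0 : ℕ), q - (n + 1)) (α (0, 1) a) = α ((0 : ℕ), q - n) a := by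
        rw [show ((0:ℕ),(1:ℕ)) = (((0:ℕ),(1:ℕ)) : ℕ × ℕ) from rfl, ← hαadd, hq1]
      rw [hcomp, sub_self]
    · rw [if_neg hc, if_neg (fun h => hc ⟨h.1, h.2.1, by omega⟩), sub_self]
  -- a unit vector
  obtain ⟨a₀, ha₀⟩ := hA
  have hπa₀ : π a₀ ≠ 0 := fun h => ha₀ (hπinj (by rw [h, map_zero]))
  have hex : ∃ h₁ : H, π a₀ h₁ ≠ 0 := by
    by_contra h
    push_neg at h
    exact hπa₀ (ContinuousLinearMap.ext fun v => by rw [h v]; rfl)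
  obtain ⟨h₁, hh₁⟩ := hex
  have hu₀ : π a₀ h₁ ≠ 0 := hh₁
  set h₀ : H := ‖π a₀ h₁‖⁻¹ • (π a₀ h₁) with hh₀def
  have hh₀ : ‖h₀‖ = 1 := by
    rw [hh₀def, norm_smul, norm_inv, norm_norm,
      inv_mul_cancel₀ (norm_ne_zero_iff.mpr hu₀)]
  -- every element of the span is killed eventually
  have key : ∀ T ∈ Submodule.span ℂ {T | ∃ (a : A) (m n x y : ℕ),
        T = ξ a (m, n) (x, y) - ξ (α (0, 1) a) (m, n + 1) (x, y + 1)},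
      ∃ Q : ℕ, ∀ q ≥ Q,
        (inner ℂ (T (lp.single 2 ((0 : ℕ), q) h₀)) (lp.single 2 ((0 : ℕ), q) h₀) : ℂ) = 0 := by
    intro T hT
    induction hT using Submodule.span_induction with
    | mem T hTmem =>
      obtain ⟨a, m, n, x, y, rfl⟩ := hTmem
      exact ⟨max n y + 1, fun q hq => hgen a m n x y h₀ q (by omega) (by omega)⟩
    | zero => exact ⟨0, fun q _ => by simp⟩
    | add T T' hT hT' ihT ihT' =>
      obtain ⟨Q, hQ⟩ := ihT
      obtain ⟨Q', hQ'⟩ := ihT'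
      refine ⟨max Q Q', fun q hq => ?_⟩
      rw [ContinuousLinearMap.add_apply, inner_add_left,
        hQ q (le_trans (le_max_left _ _) hq), hQ' q (le_trans (le_max_right _ _) hq), add_zero]
    | smul c T hT ihT =>
      obtain ⟨Q, hQ⟩ := ihT
      refine ⟨Q, fun q hq => ?_⟩
      rw [ContinuousLinearMap.smul_apply, inner_smul_left, hQ q hq, mul_zero]
  have hζnorm : ∀ q : ℕ,
      ‖(lp.single 2 ((0 : ℕ), q) h₀ : lp (fun _ : ℕ × ℕ => H) 2)‖ = 1 := by
    intro q
    have := lp.norm_single (E := fun _ : ℕ × ℕ => H) (p := 2) (by norm_num)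
      ((0 : ℕ), q) h₀
    rw [this, hh₀]
  -- `1 ∉ L`
  have h1L : (1 : lp (fun _ : ℕ × ℕ => H) 2 →L[ℂ] lp (fun _ : ℕ × ℕ => H) 2) ∉ L := by
    intro h1
    rw [hL] at h1
    have h1' : (1 : lp (fun _ : ℕ × ℕ => H) 2 →L[ℂ] lp (fun _ : ℕ × ℕ => H) 2) ∈
        closure ((Submodule.span ℂ {T | ∃ (a : A) (m n x y : ℕ),
          T = ξ a (m, n) (x, y) - ξ (α (0, 1) a) (m, n + 1) (x, y + 1)} :
            Submodule ℂ _) : Set _) := h1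
    obtain ⟨T, hTmem, hTd⟩ := Metric.mem_closure_iff.mp h1' (1 / 2) (by norm_num)
    obtain ⟨Q, hQ⟩ := key T hTmem
    set ζ : lp (fun _ : ℕ × ℕ => H) 2 := lp.single 2 ((0 : ℕ), Q) h₀ with hζdef
    have hval : (inner ℂ ((1 - T) ζ) ζ : ℂ) = 1 := by
      rw [ContinuousLinearMap.sub_apply, inner_sub_left, hQ Q le_rfl, sub_zero,
        ContinuousLinearMap.one_apply, inner_self_eq_norm_sq_to_K, hζnorm Q]
      norm_num
    have hb : ‖(inner ℂ ((1 - T) ζ) ζ : ℂ)‖ ≤ ‖(1 : _) - T‖ := by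
      calc ‖(inner ℂ ((1 - T) ζ) ζ : ℂ)‖ ≤ ‖(1 - T) ζ‖ * ‖ζ‖ := norm_inner_le_norm _ _
        _ ≤ ‖(1 : _) - T‖ * ‖ζ‖ * ‖ζ‖ :=
            mul_le_mul_of_nonneg_right (ContinuousLinearMap.le_opNorm _ _) (norm_nonneg _)
        _ = ‖(1 : _) - T‖ := by rw [hζnorm Q]; ring
    rw [hval] at hb
    have : ‖(1 : ℂ)‖ = 1 := by norm_num
    rw [this] at hb
    have hd : dist (1 : lp (fun _ : ℕ × ℕ => H) 2 →L[ℂ] lp (fun _ : ℕ × ℕ => H) 2) T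
        = ‖(1 : _) - T‖ := dist_eq_norm _ _
    rw [hd] at hTd
    linarith
  -- a nonzero element of `L`
  have hT₀mem : (ξ a₀ (0, 0) (0, 0) - ξ (α (0, 1) a₀) (0, 0 + 1) (0, 0 + 1)) ∈ L := by
    rw [hL]
    exact (Submodule.le_topologicalClosure _)
      (Submodule.subset_span ⟨a₀, 0, 0, 0, 0, rfl⟩)
  have hzz : ((0 : ℕ), (0 : ℕ)) = (0 : ℕ × ℕ) := rfl
  have hT₀app : (ξ a₀ (0, 0) (0, 0) - ξ (α (0, 1) a₀) (0, 0 + 1) (0, 0 + 1))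
      (lp.single 2 ((0 : ℕ), (0 : ℕ)) h₁) = lp.single 2 ((0 : ℕ), (0 : ℕ)) (π a₀ h₁) := by
    rw [ContinuousLinearMap.sub_apply, hξ, hξ]
    simp only [ContinuousLinearMap.mul_apply]
    have hv1 : V (0, 0 + 1) (lp.single 2 ((0 : ℕ), (0 : ℕ)) h₁) = 0 := by
      refine hVz _ _ _ (fun s hs => ?_)
      have := congrArg Prod.snd hs
      simp only [Prod.snd_add] at this
      omega
    have hv0 : V (0, 0) (lp.single 2 ((0 : ℕ), (0 : ℕ)) h₁)
        = lp.single 2 ((0 : ℕ), (0 : ℕ)) h₁ := by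
      rw [show ((0 : ℕ), (0 : ℕ)) = (0 : ℕ × ℕ) from rfl] 
      rw [hV0, ContinuousLinearMap.one_apply]
    rw [hv1, map_zero, map_zero, map_zero, sub_zero, hv0, hPs, hπs]
    have hadj : ContinuousLinearMap.adjoint (V ((0 : ℕ), (0 : ℕ))) = 1 := by
      rw [show ((0 : ℕ), (0 : ℕ)) = (0 : ℕ × ℕ) from rfl, hV0,
        ← ContinuousLinearMap.star_eq_adjoint, star_one]
    rw [hadj, ContinuousLinearMap.one_apply]
    congr 1
    rw [show ((0 : ℕ), (0 : ℕ)) = (0 : ℕ × ℕ) from rfl, hα0]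
  have hT₀ne : (ξ a₀ (0, 0) (0, 0) - ξ (α (0, 1) a₀) (0, 0 + 1) (0, 0 + 1)) ≠ 0 := by
    intro h
    have h2 : (lp.single 2 ((0 : ℕ), (0 : ℕ)) (π a₀ h₁) : lp (fun _ : ℕ × ℕ => H) 2) = 0 := by
      rw [← hT₀app, h]
      simp
    have h3 := congrArg (fun f : lp (fun _ : ℕ × ℕ => H) 2 => f ((0 : ℕ), (0 : ℕ))) h2
    simp only [lp.single_apply_self] at h3
    rw [lp.coeFn_zero] at h3
    exact hh₁ h3
  have hLbot : L ≠ ⊥ := by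
    intro hbot
    rw [hbot, Submodule.mem_bot] at hT₀mem
    exact hT₀ne hT₀mem
  refine ⟨hV0, h1C, h1L, hLbot, ⟨1, h1C, h1L⟩,
    ⟨L, hLC, ?_, hLideal, hLbot, fun h => h1L (h 1 h1C)⟩⟩
  rw [hL]
  exact Submodule.isClosed_topologicalClosure _
end
end

section
/- Assume Φ is Hausdorff. For r, s ∈ ℤ and φ ∈ Φ, the stability group of the point y = ((r,s), φ) ∈ Y is the trivial subgroup {(0,0)}, its ℤ²-orbit is ℤ × ℤ × {φ}, and the closure of this orbit in Y is (ℤ∪{∞}) × (ℤ∪{∞}) × {φ}. Consequently, for r, s, m, n ∈ ℤ, φ, ψ ∈ Φ and any γ, μ ∈ 𝕋²: ((r,s), φ, γ) ∼ ((m,n), ψ, μ) if and only if φ = ψ; and ((r,s), φ, γ) is never ∼-equivalent to a point of Y × 𝕋² whose first two coordinates are not both integers. -/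
noncomputable section

/-- The action of the group `ℤ²` on `Y = (ℤ∪{∞}) × (ℤ∪{∞}) × Φ` induced by an action
`σ` of `ℤ²` on `Φ`: integer coordinates are translated, and `σ` acts on the `Φ`-coordinate
through the quotient corresponding to the pattern of `∞`'s. -/
def act {Φ : Type*} (σ : ℤ × ℤ → Φ → Φ) (t : ℤ × ℤ) (y : WithTop ℤ × WithTop ℤ × Φ) :
    WithTop ℤ × WithTop ℤ × Φ :=
  (y.1 + (t.1 : ℤ), y.2.1 + (t.2 : ℤ),
    if y.1 = ⊤ then (if y.2.1 = ⊤ then σ t y.2.2 else σ (t.1, 0) y.2.2)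
    else (if y.2.1 = ⊤ then σ (0, t.2) y.2.2 else y.2.2))

/-- The equivalence relation `∼` on `Y × 𝕋²`: `(y, γ) ∼ (y', μ)` iff the orbit closures
of `y` and `y'` coincide and the characters `γ, μ` of `ℤ²` (a pair `(z, w) ∈ 𝕋²`
corresponds to the character `(m,n) ↦ zᵐwⁿ`) agree on the stability group of `y`. -/
def relY {Φ : Type*} [TopologicalSpace Φ] [TopologicalSpace (WithTop ℤ)]
    (σ : ℤ × ℤ → Φ → Φ)
    (p q : (WithTop ℤ × WithTop ℤ × Φ) × (Circle × Circle)) : Prop :=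
  closure (Set.range fun t : ℤ × ℤ => act σ t p.1) =
      closure (Set.range fun t : ℤ × ℤ => act σ t q.1) ∧
    ∀ t : ℤ × ℤ, act σ t p.1 = p.1 →
      p.2.1 ^ t.1 * p.2.2 ^ t.2 = q.2.1 ^ t.1 * q.2.2 ^ t.2

lemma act_int {Φ : Type*} (σ : ℤ × ℤ → Φ → Φ) (t : ℤ × ℤ) (r s : ℤ) (φ : Φ) :
    act σ t ((r : WithTop ℤ), (s : WithTop ℤ), φ)
      = (((r + t.1 : ℤ) : WithTop ℤ), ((s + t.2 : ℤ) : WithTop ℤ), φ) := by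
  simp [act, ← WithTop.coe_add]

lemma orbit_int {Φ : Type*} (σ : ℤ × ℤ → Φ → Φ) (r s : ℤ) (φ : Φ) :
    Set.range (fun t : ℤ × ℤ => act σ t ((r : WithTop ℤ), (s : WithTop ℤ), φ))
      = {p : WithTop ℤ × WithTop ℤ × Φ |
          (∃ m : ℤ, p.1 = (m : WithTop ℤ)) ∧ (∃ n : ℤ, p.2.1 = (n : WithTop ℤ)) ∧
            p.2.2 = φ} := by
  ext p
  constructor
  · rintro ⟨t, rfl⟩
    simp only [act_int]
    exact ⟨⟨_, rfl⟩, ⟨_, rfl⟩, rfl⟩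
  · rintro ⟨⟨m, hm⟩, ⟨n, hn⟩, hφ⟩
    refine ⟨(m - r, n - s), ?_⟩
    simp only [act_int]
    rw [show r + (m - r) = m by ring, show s + (n - s) = n by ring]
    exact (Prod.ext hm (Prod.ext hn hφ)).symm

lemma tendsto_int_coe_top [TopologicalSpace (WithTop ℤ)] [OrderTopology (WithTop ℤ)] :
    Filter.Tendsto (fun n : ℤ => (n : WithTop ℤ)) Filter.atTop (nhds ⊤) := by
  simp only [nhds_top_order, Filter.tendsto_iInf, Filter.tendsto_principal]
  intro l hl
  induction l using WithTop.recTopCoe with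
  | top => exact absurd hl (lt_irrefl _)
  | coe a =>
    filter_upwards [Filter.eventually_ge_atTop (a + 1)] with n hn
    exact WithTop.coe_lt_coe.mpr (lt_of_lt_of_le (lt_add_one a) hn)

lemma dense_int_coe [TopologicalSpace (WithTop ℤ)] [OrderTopology (WithTop ℤ)] :
    closure (Set.range ((↑) : ℤ → WithTop ℤ)) = Set.univ := by
  refine Set.eq_univ_of_forall fun x => ?_
  induction x using WithTop.recTopCoe with
  | top =>
    exact mem_closure_of_tendsto tendsto_int_coe_top
      (Filter.Eventually.of_forall fun n => Set.mem_range_self n)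
  | coe a => exact subset_closure ⟨a, rfl⟩

lemma closure_orbit_int {Φ : Type*} [TopologicalSpace Φ] [T2Space Φ]
    [TopologicalSpace (WithTop ℤ)] [OrderTopology (WithTop ℤ)]
    (σ : ℤ × ℤ → Φ → Φ) (r s : ℤ) (φ : Φ) :
    closure (Set.range fun t : ℤ × ℤ => act σ t ((r : WithTop ℤ), (s : WithTop ℤ), φ))
      = {p : WithTop ℤ × WithTop ℤ × Φ | p.2.2 = φ} := by
  rw [orbit_int]
  have h : {p : WithTop ℤ × WithTop ℤ × Φ |
        (∃ m : ℤ, p.1 = (m : WithTop ℤ)) ∧ (∃ n : ℤ, p.2.1 = (n : WithTop ℤ)) ∧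
          p.2.2 = φ}
      = (Set.range ((↑) : ℤ → WithTop ℤ)) ×ˢ
          ((Set.range ((↑) : ℤ → WithTop ℤ)) ×ˢ ({φ} : Set Φ)) := by
    ext ⟨x, y, z⟩
    simp only [Set.mem_setOf_eq, Set.mem_prod, Set.mem_range, Set.mem_singleton_iff]
    aesop
  rw [h, closure_prod_eq, closure_prod_eq, dense_int_coe, closure_singleton]
  ext ⟨x, y, z⟩
  simp only [Set.mem_prod, Set.mem_univ, Set.mem_singleton_iff, Set.mem_setOf_eq,
    true_and]

/-- For integer points `((r,s), φ)` of `Y`: trivial stability group,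
orbit `ℤ × ℤ × {φ}`, orbit closure `(ℤ∪{∞}) × (ℤ∪{∞}) × {φ}`; two such points (with any
characters attached) are `∼`-equivalent iff their `Φ`-coordinates agree, and an integer
point is never `∼`-equivalent to a point whose first two coordinates are not both
integers. -/
theorem stmt6 {Φ : Type*} [TopologicalSpace Φ] [T2Space Φ]
    [TopologicalSpace (WithTop ℤ)] [OrderTopology (WithTop ℤ)]
    (σ : ℤ × ℤ → Φ → Φ)
    (hσ0 : ∀ φ : Φ, σ 0 φ = φ)
    (hσadd : ∀ s t : ℤ × ℤ, ∀ φ : Φ, σ (s + t) φ = σ s (σ t φ))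
    (hσcont : ∀ t : ℤ × ℤ, Continuous (σ t))
    (r s : ℤ) (φ : Φ) :
    -- trivial stability group:
    (∀ t : ℤ × ℤ, act σ t ((r : WithTop ℤ), (s : WithTop ℤ), φ)
        = ((r : WithTop ℤ), (s : WithTop ℤ), φ) → t = 0) ∧
    -- the orbit is ℤ × ℤ × {φ}:
    (Set.range (fun t : ℤ × ℤ => act σ t ((r : WithTop ℤ), (s : WithTop ℤ), φ))
      = {p : WithTop ℤ × WithTop ℤ × Φ |
          (∃ m : ℤ, p.1 = (m : WithTop ℤ)) ∧ (∃ n : ℤ, p.2.1 = (n : WithTop ℤ)) ∧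
            p.2.2 = φ}) ∧
    -- the orbit closure is (ℤ∪{∞}) × (ℤ∪{∞}) × {φ}:
    (closure (Set.range fun t : ℤ × ℤ => act σ t ((r : WithTop ℤ), (s : WithTop ℤ), φ))
      = {p : WithTop ℤ × WithTop ℤ × Φ | p.2.2 = φ}) ∧
    -- equivalence between integer points holds exactly when the Φ-coordinates agree:
    (∀ (m n : ℤ) (ψ : Φ) (γ μ : Circle × Circle),
      relY σ (((r : WithTop ℤ), (s : WithTop ℤ), φ), γ)
        (((m : WithTop ℤ), (n : WithTop ℤ), ψ), μ) ↔ φ = ψ) ∧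
    -- an integer point is equivalent only to integer points:
    (∀ (y' : WithTop ℤ × WithTop ℤ × Φ) (γ μ : Circle × Circle),
      relY σ (((r : WithTop ℤ), (s : WithTop ℤ), φ), γ) (y', μ) →
        (∃ m : ℤ, y'.1 = (m : WithTop ℤ)) ∧ (∃ n : ℤ, y'.2.1 = (n : WithTop ℤ))) := by
  have hstab : ∀ t : ℤ × ℤ, act σ t ((r : WithTop ℤ), (s : WithTop ℤ), φ)
      = ((r : WithTop ℤ), (s : WithTop ℤ), φ) → t = 0 := by
    intro t h
    rw [act_int, Prod.ext_iff, Prod.ext_iff] at h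
    obtain ⟨h1, h2, -⟩ := h
    rw [WithTop.coe_inj] at h1 h2
    simp only [Prod.ext_iff, Prod.fst_zero, Prod.snd_zero]
    constructor <;> omega
  refine ⟨hstab, orbit_int σ r s φ, closure_orbit_int σ r s φ, ?_, ?_⟩
  · intro m n ψ γ μ
    constructor
    · rintro ⟨hcl, -⟩
      rw [closure_orbit_int, closure_orbit_int] at hcl
      have : (((0 : ℤ) : WithTop ℤ), (((0 : ℤ) : WithTop ℤ), φ))
          ∈ {p : WithTop ℤ × WithTop ℤ × Φ | p.2.2 = ψ} := hcl ▸ rfl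
      exact this
    · rintro rfl
      refine ⟨by rw [closure_orbit_int, closure_orbit_int], fun t ht => ?_⟩
      obtain rfl := hstab t ht
      simp
  · rintro ⟨a, b, ψ⟩ γ μ ⟨hcl, -⟩
    rw [closure_orbit_int] at hcl
    have hmem : ∀ c : WithTop ℤ × WithTop ℤ × Φ, c.2.2 = φ →
        c ∈ closure (Set.range fun t : ℤ × ℤ => act σ t (a, b, ψ)) := by
      intro c hc
      rw [← hcl]; exact hc
    constructor
    · refine (WithTop.ne_top_iff_exists.mp ?_).imp fun m h => h.symm
      intro hTop
      subst hTop
      have hclosed : IsClosed {p : WithTop ℤ × WithTop ℤ × Φ | p.1 = ⊤} :=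
        isClosed_eq continuous_fst continuous_const
      have hsub : closure (Set.range fun t : ℤ × ℤ => act σ t (⊤, b, ψ))
          ⊆ {p : WithTop ℤ × WithTop ℤ × Φ | p.1 = ⊤} := by
        refine closure_minimal ?_ hclosed
        rintro _ ⟨t, rfl⟩
        simp [act]
      have := hsub (hmem (((0 : ℤ) : WithTop ℤ), (((0 : ℤ) : WithTop ℤ), φ)) rfl)
      exact WithTop.coe_ne_top this
    · refine (WithTop.ne_top_iff_exists.mp ?_).imp fun n h => h.symm
      intro hTop
      subst hTop
      have hclosed : IsClosed {p : WithTop ℤ × WithTop ℤ × Φ | p.2.1 = ⊤} :=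
        isClosed_eq (continuous_fst.comp continuous_snd) continuous_const
      have hsub : closure (Set.range fun t : ℤ × ℤ => act σ t (a, ⊤, ψ))
          ⊆ {p : WithTop ℤ × WithTop ℤ × Φ | p.2.1 = ⊤} := by
        refine closure_minimal ?_ hclosed
        rintro _ ⟨t, rfl⟩
        simp [act]
      have := hsub (hmem (((0 : ℤ) : WithTop ℤ), (((0 : ℤ) : WithTop ℤ), φ)) rfl)
      exact WithTop.coe_ne_top this
end
end

section
/- Assume Φ is Hausdorff. For φ ∈ Φ, the stability group of ((∞,∞), φ) ∈ Y equals the stability group ℤ²_φ = {(m,n) : (m,n)·φ = φ} of φ, and its ℤ²-orbit is {(∞,∞)} × (ℤ²·φ). For φ, ψ ∈ Φ and γ, μ ∈ 𝕋²: ((∞,∞), φ, γ) ∼ ((∞,∞), ψ, μ) if and only if the closures of ℤ²·φ and ℤ²·ψ in Φ coincide and γ, μ restrict to the same character of ℤ²_φ; moreover, ((∞,∞), φ, γ) can only be ∼-equivalent to points whose first two coordinates are both ∞. -/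
noncomputable section

/-- For points `((∞,∞), φ)` of `Y`: the stability group equals the
stability group `ℤ²_φ` of `φ`, the orbit is `{(∞,∞)} × (ℤ²·φ)`, two such points with
characters attached are `∼`-equivalent iff the closures of the `ℤ²`-orbits of `φ, ψ` in
`Φ` coincide and the characters agree on `ℤ²_φ`, and such a point is `∼`-equivalent only
to points whose first two coordinates are both `∞`. -/
theorem stmt7 {Φ : Type*} [TopologicalSpace Φ] [T2Space Φ]
    [TopologicalSpace (WithTop ℤ)] [OrderTopology (WithTop ℤ)]
    (σ : ℤ × ℤ → Φ → Φ)
    (hσ0 : ∀ φ : Φ, σ 0 φ = φ)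
    (hσadd : ∀ s t : ℤ × ℤ, ∀ φ : Φ, σ (s + t) φ = σ s (σ t φ))
    (hσcont : ∀ t : ℤ × ℤ, Continuous (σ t))
    (φ : Φ) :
    -- the stability group of ((∞,∞), φ) is ℤ²_φ:
    ({t : ℤ × ℤ | act σ t ((⊤ : WithTop ℤ), (⊤ : WithTop ℤ), φ)
        = ((⊤ : WithTop ℤ), (⊤ : WithTop ℤ), φ)} = {t : ℤ × ℤ | σ t φ = φ}) ∧
    -- the orbit is {(∞,∞)} × (ℤ²·φ):
    (Set.range (fun t : ℤ × ℤ => act σ t ((⊤ : WithTop ℤ), (⊤ : WithTop ℤ), φ))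
      = {p : WithTop ℤ × WithTop ℤ × Φ |
          p.1 = (⊤ : WithTop ℤ) ∧ p.2.1 = (⊤ : WithTop ℤ) ∧ ∃ t : ℤ × ℤ, σ t φ = p.2.2}) ∧
    -- characterization of equivalence between two such points:
    (∀ (ψ : Φ) (γ μ : Circle × Circle),
      relY σ (((⊤ : WithTop ℤ), (⊤ : WithTop ℤ), φ), γ)
          (((⊤ : WithTop ℤ), (⊤ : WithTop ℤ), ψ), μ) ↔
        (closure (Set.range fun t : ℤ × ℤ => σ t φ)
            = closure (Set.range fun t : ℤ × ℤ => σ t ψ) ∧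
          ∀ t : ℤ × ℤ, σ t φ = φ →
            γ.1 ^ t.1 * γ.2 ^ t.2 = μ.1 ^ t.1 * μ.2 ^ t.2)) ∧
    -- such a point is equivalent only to points with both coordinates ∞:
    (∀ (y' : WithTop ℤ × WithTop ℤ × Φ) (γ μ : Circle × Circle),
      relY σ (((⊤ : WithTop ℤ), (⊤ : WithTop ℤ), φ), γ) (y', μ) →
        y'.1 = (⊤ : WithTop ℤ) ∧ y'.2.1 = (⊤ : WithTop ℤ)) := by
  
  have hact : ∀ (t : ℤ × ℤ) (χ : Φ),
      act σ t ((⊤ : WithTop ℤ), (⊤ : WithTop ℤ), χ) = ((⊤ : WithTop ℤ), (⊤ : WithTop ℤ), σ t χ) := by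
    intro t χ; simp [act]
  have horbit : ∀ χ : Φ,
      (Set.range fun t : ℤ × ℤ => act σ t ((⊤ : WithTop ℤ), (⊤ : WithTop ℤ), χ))
        = ({(⊤ : WithTop ℤ)} : Set (WithTop ℤ)) ×ˢ
            (({(⊤ : WithTop ℤ)} : Set (WithTop ℤ)) ×ˢ (Set.range fun t : ℤ × ℤ => σ t χ)) := by
    intro χ; ext ⟨a, b, c⟩
    simp only [Set.mem_range, Set.mem_prod, Set.mem_singleton_iff]
    constructor
    · rintro ⟨t, ht⟩
      rw [hact] at ht
      rw [Prod.ext_iff, Prod.ext_iff] at ht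
      exact ⟨ht.1.symm, ht.2.1.symm, t, ht.2.2⟩
    · rintro ⟨rfl, rfl, t, rfl⟩
      exact ⟨t, hact t χ⟩
  have hclosed : IsClosed ({(⊤ : WithTop ℤ)} : Set (WithTop ℤ)) := isClosed_singleton
  have hclos : ∀ χ : Φ,
      closure (Set.range fun t : ℤ × ℤ => act σ t ((⊤ : WithTop ℤ), (⊤ : WithTop ℤ), χ))
        = ({(⊤ : WithTop ℤ)} : Set (WithTop ℤ)) ×ˢ
            (({(⊤ : WithTop ℤ)} : Set (WithTop ℤ)) ×ˢ closure (Set.range fun t : ℤ × ℤ => σ t χ)) := by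
    intro χ
    rw [horbit, closure_prod_eq, closure_prod_eq, hclosed.closure_eq]
  have hstab : ∀ χ : Φ,
      ({t : ℤ × ℤ | act σ t ((⊤ : WithTop ℤ), (⊤ : WithTop ℤ), χ)
        = ((⊤ : WithTop ℤ), (⊤ : WithTop ℤ), χ)} = {t : ℤ × ℤ | σ t χ = χ}) := by
    intro χ; ext t
    simp only [Set.mem_setOf_eq, hact]
    constructor
    · intro h; exact congrArg (fun p => p.2.2) h
    · intro h; rw [h]
  refine ⟨hstab φ, ?_, ?_, ?_⟩
  · rw [horbit]; ext ⟨a, b, c⟩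
    simp only [Set.mem_prod, Set.mem_singleton_iff, Set.mem_range, Set.mem_setOf_eq]
  · intro ψ γ μ
    unfold relY
    constructor
    · rintro ⟨h1, h2⟩
      refine ⟨?_, ?_⟩
      · rw [hclos, hclos] at h1
        ext x
        have := Set.ext_iff.mp h1 ((⊤ : WithTop ℤ), (⊤ : WithTop ℤ), x)
        simpa [Set.mem_prod] using this
      · intro t ht
        apply h2
        rw [hact, ht]
    · rintro ⟨h1, h2⟩
      refine ⟨by rw [hclos, hclos, h1], ?_⟩
      intro t ht
      rw [hact] at ht
      exact h2 t (congrArg (fun p => p.2.2) ht)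
  · rintro y' γ μ ⟨h1, -⟩
    have h0 : act σ 0 y' = y' := by
      obtain ⟨a, b, c⟩ := y'
      have : ((0 : ℤ × ℤ).1 : ℤ) = 0 := rfl
      simp only [act]
      have h1 : σ ((0 : ℤ × ℤ).1, 0) c = c := hσ0 c
      have h2 : σ (0, (0 : ℤ × ℤ).2) c = c := hσ0 c
      split_ifs <;> simp_all [hσ0]
    have hy : y' ∈ closure (Set.range fun t : ℤ × ℤ => act σ t y') :=
      subset_closure ⟨0, h0⟩
    rw [← h1, hclos] at hy
    exact ⟨hy.1, hy.2.1⟩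
end
end

section
/- Assume Φ is Hausdorff. For r ∈ ℤ and φ ∈ Φ, the stability group of ((∞, r), φ) ∈ Y is Ż_φ × {0}, where Ż_φ = {m ∈ ℤ : α̇_m φ = φ}, and its ℤ²-orbit is {∞} × ℤ × {α̇_m φ : m ∈ ℤ}. For r, s ∈ ℤ, φ, ψ ∈ Φ, and (z₁,z₂), (w₁,w₂) ∈ 𝕋²: ((∞,r), φ, (z₁,z₂)) ∼ ((∞,s), ψ, (w₁,w₂)) if and only if the closures in Φ of the α̇-orbits {α̇_m φ : m ∈ ℤ} and {α̇_m ψ : m ∈ ℤ} coincide and z₁ᵐ = w₁ᵐ for all m ∈ Ż_φ; moreover, ((∞,r), φ, (z₁,z₂)) can only be ∼-equivalent to points whose first coordinate is ∞ and second coordinate is an integer. -/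
noncomputable section

set_option linter.unusedSectionVars false
section aux
variable {Φ : Type*} [TopologicalSpace Φ]
    [TopologicalSpace (WithTop ℤ)] [OrderTopology (WithTop ℤ)]
    (σ : ℤ × ℤ → Φ → Φ)

lemma act_aux (t : ℤ × ℤ) (r : ℤ) (φ : Φ) :
    act σ t ((⊤ : WithTop ℤ), (r : WithTop ℤ), φ)
      = ((⊤ : WithTop ℤ), ((r + t.2 : ℤ) : WithTop ℤ), σ (t.1, 0) φ) := by
  simp [act, top_add, WithTop.coe_add]

lemma act_zero (hσ0 : ∀ φ : Φ, σ 0 φ = φ) (y : WithTop ℤ × WithTop ℤ × Φ) :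
    act σ 0 y = y := by
  obtain ⟨a, b, c⟩ := y
  have h1 : σ ((0:ℤ×ℤ).1, (0:ℤ)) c = c := hσ0 c
  have h2 : σ ((0:ℤ), (0:ℤ×ℤ).2) c = c := hσ0 c
  have h3 : σ (0:ℤ×ℤ) c = c := hσ0 c
  simp only [act]
  split_ifs <;> simp_all

lemma top_mem_closure_coe :
    (⊤ : WithTop ℤ) ∈ closure (Set.range (fun n : ℤ => (n : WithTop ℤ))) := by
  rw [mem_closure_iff_nhds_basis nhds_top_basis]
  intro a ha
  obtain ⟨n, rfl⟩ := WithTop.ne_top_iff_exists.1 ha.ne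
  exact ⟨((n+1 : ℤ) : WithTop ℤ), ⟨n+1, rfl⟩, Set.mem_Ioi.2 (by exact_mod_cast lt_add_one n)⟩

lemma closure_range_coe :
    closure (Set.range (fun n : ℤ => (n : WithTop ℤ))) = Set.univ := by
  rw [Set.eq_univ_iff_forall]
  intro x
  induction x using WithTop.recTopCoe with
  | top => exact top_mem_closure_coe
  | coe n => exact subset_closure ⟨n, rfl⟩

lemma orbit_eq (r : ℤ) (φ : Φ) :
    Set.range (fun t : ℤ × ℤ => act σ t ((⊤ : WithTop ℤ), (r : WithTop ℤ), φ))
      = {(⊤ : WithTop ℤ)} ×ˢ (Set.range (fun n : ℤ => (n : WithTop ℤ)))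
          ×ˢ (Set.range fun m : ℤ => σ (m, 0) φ) := by
  ext ⟨a, b, c⟩
  simp only [Set.mem_range, Set.mem_prod, Set.mem_singleton_iff]
  constructor
  · rintro ⟨t, ht⟩
    rw [act_aux] at ht
    rw [Prod.ext_iff, Prod.ext_iff] at ht
    obtain ⟨h1, h2, h3⟩ := ht
    exact ⟨h1.symm, ⟨r + t.2, h2⟩, ⟨t.1, h3⟩⟩
  · rintro ⟨rfl, ⟨n, rfl⟩, ⟨m, rfl⟩⟩
    exact ⟨(m, n - r), by rw [act_aux]; norm_num⟩

lemma closure_orbit (r : ℤ) (φ : Φ) :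
    closure (Set.range (fun t : ℤ × ℤ => act σ t ((⊤ : WithTop ℤ), (r : WithTop ℤ), φ)))
      = {(⊤ : WithTop ℤ)} ×ˢ (Set.univ : Set (WithTop ℤ))
          ×ˢ closure (Set.range fun m : ℤ => σ (m, 0) φ) := by
  rw [orbit_eq, closure_prod_eq, closure_prod_eq, closure_singleton, closure_range_coe]

end aux

/-- For points `((∞,r), φ)` of `Y`: the stability group is `Ż_φ × {0}`
where `Ż_φ = {m : σ(m,0)φ = φ}`, the orbit is `{∞} × ℤ × {α̇_m φ}`, two such points with
characters attached are `∼`-equivalent iff the closures of the `α̇`-orbits coincide and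
`z₁ᵐ = w₁ᵐ` for all `m ∈ Ż_φ`, and such a point is `∼`-equivalent only to points whose
first coordinate is `∞` and whose second coordinate is an integer. -/

theorem stmt8 {Φ : Type*} [TopologicalSpace Φ] [T2Space Φ]
    [TopologicalSpace (WithTop ℤ)] [OrderTopology (WithTop ℤ)]
    (σ : ℤ × ℤ → Φ → Φ)
    (hσ0 : ∀ φ : Φ, σ 0 φ = φ)
    (hσadd : ∀ s t : ℤ × ℤ, ∀ φ : Φ, σ (s + t) φ = σ s (σ t φ))
    (hσcont : ∀ t : ℤ × ℤ, Continuous (σ t))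
    (r : ℤ) (φ : Φ) :
    -- the stability group of ((∞,r), φ) is Ż_φ × {0}:
    ({t : ℤ × ℤ | act σ t ((⊤ : WithTop ℤ), (r : WithTop ℤ), φ)
        = ((⊤ : WithTop ℤ), (r : WithTop ℤ), φ)}
      = {t : ℤ × ℤ | σ (t.1, 0) φ = φ ∧ t.2 = 0}) ∧
    -- the orbit is {∞} × ℤ × (α̇-orbit of φ):
    (Set.range (fun t : ℤ × ℤ => act σ t ((⊤ : WithTop ℤ), (r : WithTop ℤ), φ))
      = {p : WithTop ℤ × WithTop ℤ × Φ |
          p.1 = (⊤ : WithTop ℤ) ∧ (∃ n : ℤ, p.2.1 = (n : WithTop ℤ)) ∧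
            ∃ m : ℤ, σ (m, 0) φ = p.2.2}) ∧
    -- characterization of equivalence between two such points:
    (∀ (s : ℤ) (ψ : Φ) (z₁ z₂ w₁ w₂ : Circle),
      relY σ (((⊤ : WithTop ℤ), (r : WithTop ℤ), φ), (z₁, z₂))
          (((⊤ : WithTop ℤ), (s : WithTop ℤ), ψ), (w₁, w₂)) ↔
        (closure (Set.range fun m : ℤ => σ (m, 0) φ)
            = closure (Set.range fun m : ℤ => σ (m, 0) ψ) ∧
          ∀ m : ℤ, σ (m, 0) φ = φ → z₁ ^ m = w₁ ^ m)) ∧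
    -- such a point is equivalent only to points of the form (∞, integer, ·):
    (∀ (y' : WithTop ℤ × WithTop ℤ × Φ) (γ μ : Circle × Circle),
      relY σ (((⊤ : WithTop ℤ), (r : WithTop ℤ), φ), γ) (y', μ) →
        y'.1 = (⊤ : WithTop ℤ) ∧ ∃ n : ℤ, y'.2.1 = (n : WithTop ℤ)) := by
  have hstab : {t : ℤ × ℤ | act σ t ((⊤ : WithTop ℤ), (r : WithTop ℤ), φ)
        = ((⊤ : WithTop ℤ), (r : WithTop ℤ), φ)}
      = {t : ℤ × ℤ | σ (t.1, 0) φ = φ ∧ t.2 = 0} := by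
    ext t
    simp only [Set.mem_setOf_eq, act_aux, Prod.ext_iff, WithTop.coe_inj]
    constructor
    · rintro ⟨-, h2, h3⟩
      exact ⟨h3, by omega⟩
    · rintro ⟨h1, h2⟩
      exact ⟨trivial, by omega, h1⟩
  refine ⟨hstab, ?_, ?_, ?_⟩
  · rw [orbit_eq]
    ext ⟨a, b, c⟩
    simp only [Set.mem_prod, Set.mem_singleton_iff, Set.mem_range, Set.mem_setOf_eq]
    exact and_congr Iff.rfl (and_congr (exists_congr fun n => eq_comm) Iff.rfl)
  · intro s ψ z₁ z₂ w₁ w₂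
    constructor
    · rintro ⟨hcl, hch⟩
      rw [closure_orbit, closure_orbit] at hcl
      constructor
      · ext x
        constructor
        · intro hx
          have := (Set.ext_iff.1 hcl ((⊤ : WithTop ℤ), (⊤ : WithTop ℤ), x)).1
            ⟨rfl, Set.mem_univ _, hx⟩
          exact this.2.2
        · intro hx
          have := (Set.ext_iff.1 hcl ((⊤ : WithTop ℤ), (⊤ : WithTop ℤ), x)).2
            ⟨rfl, Set.mem_univ _, hx⟩
          exact this.2.2
      · intro m hm
        have := hch (m, 0) (by rw [act_aux]; simp [hm])
        simpa using this
    · rintro ⟨hcl, hch⟩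
      refine ⟨by rw [closure_orbit, closure_orbit, hcl], ?_⟩
      intro t ht
      have ht' : σ (t.1, 0) φ = φ ∧ t.2 = 0 := (Set.ext_iff.1 hstab t).1 ht
      rw [ht'.2]
      simp [hch t.1 ht'.1]
  · intro y' γ μ hrel
    obtain ⟨hcl, -⟩ := hrel
    have hy'mem : y' ∈ closure (Set.range fun t : ℤ × ℤ => act σ t y') :=
      subset_closure ⟨0, act_zero σ hσ0 y'⟩
    have hy'mem' : y' ∈ closure (Set.range fun t : ℤ × ℤ =>
        act σ t ((⊤ : WithTop ℤ), (r : WithTop ℤ), φ)) := by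
      rw [hcl]; exact hy'mem
    have hclosed : IsClosed {q : WithTop ℤ × WithTop ℤ × Φ | q.1 = ⊤} :=
      isClosed_singleton.preimage continuous_fst
    have hsub : Set.range (fun t : ℤ × ℤ => act σ t ((⊤ : WithTop ℤ), (r : WithTop ℤ), φ))
        ⊆ {q : WithTop ℤ × WithTop ℤ × Φ | q.1 = ⊤} := by
      rintro q ⟨t, rfl⟩
      simp [act_aux]
    refine ⟨closure_minimal hsub hclosed hy'mem', ?_⟩
    by_cases hb : y'.2.1 = ⊤
    · exfalso
      have hsub2 : Set.range (fun t : ℤ × ℤ => act σ t y')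
          ⊆ {q : WithTop ℤ × WithTop ℤ × Φ | q.2.1 = ⊤} := by
        rintro q ⟨t, rfl⟩
        simp [act, hb, top_add]
      have hclosed2 : IsClosed {q : WithTop ℤ × WithTop ℤ × Φ | q.2.1 = ⊤} :=
        isClosed_singleton.preimage (continuous_fst.comp continuous_snd)
      have hp : ((⊤ : WithTop ℤ), (r : WithTop ℤ), φ)
          ∈ closure (Set.range fun t : ℤ × ℤ => act σ t y') := by
        rw [← hcl]
        exact subset_closure ⟨0, act_zero σ hσ0 _⟩
      exact WithTop.coe_ne_top (closure_minimal hsub2 hclosed2 hp)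
    · obtain ⟨n, hn⟩ := WithTop.ne_top_iff_exists.1 hb
      exact ⟨n, hn.symm⟩
end
end

section
/- Assume Φ is Hausdorff. The assignments [((r,s), φ, γ)] ↦ φ for r, s ∈ ℤ; [((∞,r), φ, (z₁,z₂))] ↦ [(φ, z₁)] ∈ (Φ×𝕋)/∼₁ for r ∈ ℤ; [((r,∞), φ, (z₁,z₂))] ↦ [(φ, z₂)] ∈ (Φ×𝕋)/∼₂ for r ∈ ℤ; and [((∞,∞), φ, (z,w))] ↦ [(φ, (z,w))] ∈ (Φ×𝕋²)/∼ are well defined and combine to give a bijection from the quotient set (Y×𝕋²)/∼ onto the disjoint union Φ ⊔ (Φ×𝕋)/∼₁ ⊔ (Φ×𝕋)/∼₂ ⊔ (Φ×𝕋²)/∼. -/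
noncomputable section

/-- The relation `∼₁` on `Φ × 𝕋` coming from the action `α̇_m = σ(m,0)` of `ℤ`. -/
def rel1 {Φ : Type*} [TopologicalSpace Φ] (σ : ℤ × ℤ → Φ → Φ)
    (p q : Φ × Circle) : Prop :=
  closure (Set.range fun m : ℤ => σ (m, 0) p.1) =
      closure (Set.range fun m : ℤ => σ (m, 0) q.1) ∧
    ∀ m : ℤ, σ (m, 0) p.1 = p.1 → p.2 ^ m = q.2 ^ m

/-- The relation `∼₂` on `Φ × 𝕋` coming from the action `α̈_n = σ(0,n)` of `ℤ`. -/
def rel2 {Φ : Type*} [TopologicalSpace Φ] (σ : ℤ × ℤ → Φ → Φ)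
    (p q : Φ × Circle) : Prop :=
  closure (Set.range fun n : ℤ => σ (0, n) p.1) =
      closure (Set.range fun n : ℤ => σ (0, n) q.1) ∧
    ∀ n : ℤ, σ (0, n) p.1 = p.1 → p.2 ^ n = q.2 ^ n

/-- The relation `∼` on `Φ × 𝕋²` coming from the full `ℤ²`-action on `Φ`. -/
def relPhi {Φ : Type*} [TopologicalSpace Φ] (σ : ℤ × ℤ → Φ → Φ)
    (p q : Φ × (Circle × Circle)) : Prop :=
  closure (Set.range fun t : ℤ × ℤ => σ t p.1) =
      closure (Set.range fun t : ℤ × ℤ => σ t q.1) ∧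
    ∀ t : ℤ × ℤ, σ t p.1 = p.1 →
      p.2.1 ^ t.1 * p.2.2 ^ t.2 = q.2.1 ^ t.1 * q.2.2 ^ t.2

set_option linter.unusedSectionVars false

def phiMap {Φ : Type*} [TopologicalSpace Φ] (σ : ℤ × ℤ → Φ → Φ)
    (p : (WithTop ℤ × WithTop ℤ × Φ) × (Circle × Circle)) :
    Φ ⊕ (Quot (rel1 σ) ⊕ (Quot (rel2 σ) ⊕ Quot (relPhi σ))) :=
  if p.1.1 = ⊤ then
    if p.1.2.1 = ⊤ then Sum.inr (Sum.inr (Sum.inr (Quot.mk _ (p.1.2.2, p.2))))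
    else Sum.inr (Sum.inl (Quot.mk _ (p.1.2.2, p.2.1)))
  else
    if p.1.2.1 = ⊤ then Sum.inr (Sum.inr (Sum.inl (Quot.mk _ (p.1.2.2, p.2.2))))
    else Sum.inl p.1.2.2

namespace Stmt10Aux

open Set

variable {Φ : Type*} [TopologicalSpace Φ] [T2Space Φ]
  [TopologicalSpace (WithTop ℤ)] [OrderTopology (WithTop ℤ)]
  (σ : ℤ × ℤ → Φ → Φ)

lemma dense_coe : closure (Set.range ((↑) : ℤ → WithTop ℤ)) = Set.univ := by
  apply Set.eq_univ_of_forall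
  intro x
  rcases eq_or_ne x ⊤ with rfl | hx
  · rw [mem_closure_iff_nhds_basis nhds_top_basis]
    intro a ha
    obtain ⟨k, rfl⟩ := WithTop.ne_top_iff_exists.mp ha.ne
    exact ⟨((k + 1 : ℤ) : WithTop ℤ), ⟨k + 1, rfl⟩,
      Set.mem_Ioi.mpr (by exact_mod_cast lt_add_one k)⟩
  · obtain ⟨k, rfl⟩ := WithTop.ne_top_iff_exists.mp hx
    exact subset_closure ⟨k, rfl⟩

lemma act_ff (a b : ℤ) (φ : Φ) (t : ℤ × ℤ) :
    act σ t ((a : WithTop ℤ), (b : WithTop ℤ), φ)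
      = (((a + t.1 : ℤ) : WithTop ℤ), ((b + t.2 : ℤ) : WithTop ℤ), φ) := by
  simp [act, WithTop.coe_ne_top]

lemma act_tf (b : ℤ) (φ : Φ) (t : ℤ × ℤ) :
    act σ t ((⊤ : WithTop ℤ), (b : WithTop ℤ), φ)
      = ((⊤ : WithTop ℤ), ((b + t.2 : ℤ) : WithTop ℤ), σ (t.1, 0) φ) := by
  simp [act, WithTop.coe_ne_top]

lemma act_ft (a : ℤ) (φ : Φ) (t : ℤ × ℤ) :
    act σ t ((a : WithTop ℤ), (⊤ : WithTop ℤ), φ)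
      = (((a + t.1 : ℤ) : WithTop ℤ), (⊤ : WithTop ℤ), σ (0, t.2) φ) := by
  simp [act, WithTop.coe_ne_top]

lemma act_tt (φ : Φ) (t : ℤ × ℤ) :
    act σ t ((⊤ : WithTop ℤ), (⊤ : WithTop ℤ), φ)
      = ((⊤ : WithTop ℤ), (⊤ : WithTop ℤ), σ t φ) := by
  simp [act]


lemma cl_ff (a b : ℤ) (φ : Φ) :
    closure (Set.range fun t : ℤ × ℤ => act σ t ((a : WithTop ℤ), (b : WithTop ℤ), φ))
      = (Set.univ : Set (WithTop ℤ)) ×ˢ (Set.univ : Set (WithTop ℤ)) ×ˢ ({φ} : Set Φ) := by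
  have hr : (Set.range fun t : ℤ × ℤ => act σ t ((a : WithTop ℤ), (b : WithTop ℤ), φ))
      = (Set.range ((↑) : ℤ → WithTop ℤ)) ×ˢ (Set.range ((↑) : ℤ → WithTop ℤ)) ×ˢ ({φ} : Set Φ) := by
    ext ⟨x, y, z⟩
    simp only [Set.mem_range, Set.mem_prod, Set.mem_singleton_iff]
    constructor
    · rintro ⟨t, ht⟩
      rw [act_ff, Prod.mk.injEq, Prod.mk.injEq] at ht
      exact ⟨⟨_, ht.1⟩, ⟨_, ht.2.1⟩, ht.2.2.symm⟩
    · rintro ⟨⟨k, rfl⟩, ⟨l, rfl⟩, rfl⟩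
      exact ⟨(k - a, l - b), by rw [act_ff, show a + (k - a) = k by omega,
        show b + (l - b) = l by omega]⟩
  rw [hr, closure_prod_eq, closure_prod_eq, dense_coe, closure_singleton]

lemma cl_tf (b : ℤ) (φ : Φ) :
    closure (Set.range fun t : ℤ × ℤ => act σ t ((⊤ : WithTop ℤ), (b : WithTop ℤ), φ))
      = ({⊤} : Set (WithTop ℤ)) ×ˢ (Set.univ : Set (WithTop ℤ)) ×ˢ
          closure (Set.range fun m : ℤ => σ (m, 0) φ) := by
  have hr : (Set.range fun t : ℤ × ℤ => act σ t ((⊤ : WithTop ℤ), (b : WithTop ℤ), φ))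
      = ({⊤} : Set (WithTop ℤ)) ×ˢ (Set.range ((↑) : ℤ → WithTop ℤ)) ×ˢ
          (Set.range fun m : ℤ => σ (m, 0) φ) := by
    ext ⟨x, y, z⟩
    simp only [Set.mem_range, Set.mem_prod, Set.mem_singleton_iff]
    constructor
    · rintro ⟨t, ht⟩
      rw [act_tf, Prod.mk.injEq, Prod.mk.injEq] at ht
      exact ⟨ht.1.symm, ⟨_, ht.2.1⟩, ⟨t.1, ht.2.2⟩⟩
    · rintro ⟨rfl, ⟨l, rfl⟩, ⟨m, rfl⟩⟩
      exact ⟨(m, l - b), by rw [act_tf, show b + (l - b) = l by omega]⟩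
  rw [hr, closure_prod_eq, closure_prod_eq, dense_coe, closure_singleton]

lemma cl_ft (a : ℤ) (φ : Φ) :
    closure (Set.range fun t : ℤ × ℤ => act σ t ((a : WithTop ℤ), (⊤ : WithTop ℤ), φ))
      = (Set.univ : Set (WithTop ℤ)) ×ˢ ({⊤} : Set (WithTop ℤ)) ×ˢ
          closure (Set.range fun n : ℤ => σ (0, n) φ) := by
  have hr : (Set.range fun t : ℤ × ℤ => act σ t ((a : WithTop ℤ), (⊤ : WithTop ℤ), φ))
      = (Set.range ((↑) : ℤ → WithTop ℤ)) ×ˢ ({⊤} : Set (WithTop ℤ)) ×ˢ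
          (Set.range fun n : ℤ => σ (0, n) φ) := by
    ext ⟨x, y, z⟩
    simp only [Set.mem_range, Set.mem_prod, Set.mem_singleton_iff]
    constructor
    · rintro ⟨t, ht⟩
      rw [act_ft, Prod.mk.injEq, Prod.mk.injEq] at ht
      exact ⟨⟨_, ht.1⟩, ht.2.1.symm, ⟨t.2, ht.2.2⟩⟩
    · rintro ⟨⟨k, rfl⟩, rfl, ⟨n, rfl⟩⟩
      exact ⟨(k - a, n), by rw [act_ft, show a + (k - a) = k by omega]⟩
  rw [hr, closure_prod_eq, closure_prod_eq, dense_coe, closure_singleton]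

lemma cl_tt (φ : Φ) :
    closure (Set.range fun t : ℤ × ℤ => act σ t ((⊤ : WithTop ℤ), (⊤ : WithTop ℤ), φ))
      = ({⊤} : Set (WithTop ℤ)) ×ˢ ({⊤} : Set (WithTop ℤ)) ×ˢ
          closure (Set.range fun t : ℤ × ℤ => σ t φ) := by
  have hr : (Set.range fun t : ℤ × ℤ => act σ t ((⊤ : WithTop ℤ), (⊤ : WithTop ℤ), φ))
      = ({⊤} : Set (WithTop ℤ)) ×ˢ ({⊤} : Set (WithTop ℤ)) ×ˢ
          (Set.range fun t : ℤ × ℤ => σ t φ) := by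
    ext ⟨x, y, z⟩
    simp only [Set.mem_range, Set.mem_prod, Set.mem_singleton_iff]
    constructor
    · rintro ⟨t, ht⟩
      rw [act_tt, Prod.mk.injEq, Prod.mk.injEq] at ht
      exact ⟨ht.1.symm, ht.2.1.symm, ⟨t, ht.2.2⟩⟩
    · rintro ⟨rfl, rfl, ⟨t, rfl⟩⟩
      exact ⟨t, by rw [act_tt]⟩
  rw [hr, closure_prod_eq, closure_prod_eq, closure_singleton]

/-! ### stabilizers -/

lemma stab_ff {a b : ℤ} {φ : Φ} {t : ℤ × ℤ}
    (h : act σ t ((a : WithTop ℤ), (b : WithTop ℤ), φ) = ((a : WithTop ℤ), (b : WithTop ℤ), φ)) :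
    t = 0 := by
  rw [act_ff, Prod.mk.injEq, Prod.mk.injEq] at h
  have h1 : a + t.1 = a := by exact_mod_cast h.1
  have h2 : b + t.2 = b := by exact_mod_cast h.2.1
  have h3 : t.1 = 0 := by omega
  have h4 : t.2 = 0 := by omega
  rw [Prod.ext_iff]
  exact ⟨by rw [h3]; rfl, by rw [h4]; rfl⟩

lemma stab_tf {b : ℤ} {φ : Φ} {t : ℤ × ℤ}
    (h : act σ t ((⊤ : WithTop ℤ), (b : WithTop ℤ), φ) = ((⊤ : WithTop ℤ), (b : WithTop ℤ), φ)) :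
    t.2 = 0 ∧ σ (t.1, 0) φ = φ := by
  rw [act_tf, Prod.mk.injEq, Prod.mk.injEq] at h
  have h1 : b + t.2 = b := by exact_mod_cast h.2.1
  exact ⟨by omega, h.2.2⟩

lemma stab_ft {a : ℤ} {φ : Φ} {t : ℤ × ℤ}
    (h : act σ t ((a : WithTop ℤ), (⊤ : WithTop ℤ), φ) = ((a : WithTop ℤ), (⊤ : WithTop ℤ), φ)) :
    t.1 = 0 ∧ σ (0, t.2) φ = φ := by
  rw [act_ft, Prod.mk.injEq, Prod.mk.injEq] at h
  have h1 : a + t.1 = a := by exact_mod_cast h.1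
  exact ⟨by omega, h.2.2⟩

lemma stab_tt {φ : Φ} {t : ℤ × ℤ}
    (h : act σ t ((⊤ : WithTop ℤ), (⊤ : WithTop ℤ), φ) = ((⊤ : WithTop ℤ), (⊤ : WithTop ℤ), φ)) :
    σ t φ = φ := by
  rw [act_tt, Prod.mk.injEq, Prod.mk.injEq] at h
  exact h.2.2

lemma prod_prod_inj {X Y Z : Type*} {A : Set X} {B : Set Y} {C D : Set Z} {a : X} {b : Y}
    (hA : a ∈ A) (hB : b ∈ B) (h : A ×ˢ B ×ˢ C = A ×ˢ B ×ˢ D) : C = D := by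
  ext x
  have := Set.ext_iff.mp h (a, b, x)
  simpa [hA, hB] using this

/-! ### fixed points transfer along equal orbit closures -/

variable (hσ0 : ∀ φ : Φ, σ 0 φ = φ)
  (hσadd : ∀ s t : ℤ × ℤ, ∀ φ : Φ, σ (s + t) φ = σ s (σ t φ))
  (hσcont : ∀ t : ℤ × ℤ, Continuous (σ t))

include hσ0 hσadd hσcont

lemma fix_transfer {ι : Type*} (e : ι → ℤ × ℤ) (i₀ : ι) (he : e i₀ = 0) {φ ψ : Φ}
    (hcl : closure (Set.range fun i => σ (e i) φ) = closure (Set.range fun i => σ (e i) ψ))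
    {g : ℤ × ℤ} (hg : σ g φ = φ) : σ g ψ = ψ := by
  have hψ : ψ ∈ closure (Set.range fun i => σ (e i) φ) := by
    rw [hcl]
    refine subset_closure ⟨i₀, ?_⟩
    show σ (e i₀) ψ = ψ
    rw [he]; exact hσ0 ψ
  have hclosed : IsClosed {x : Φ | σ g x = x} := isClosed_eq (hσcont g) continuous_id
  have hsub : (Set.range fun i => σ (e i) φ) ⊆ {x : Φ | σ g x = x} := by
    rintro _ ⟨i, rfl⟩
    show σ g (σ (e i) φ) = σ (e i) φ
    rw [← hσadd g (e i) φ, add_comm, hσadd (e i) g φ, hg]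
  exact hclosed.closure_subset_iff.mpr hsub hψ

lemma rel1_equiv : Equivalence (rel1 σ) := by
  constructor
  · exact fun p => ⟨rfl, fun m _ => rfl⟩
  · rintro p q ⟨h1, h2⟩
    refine ⟨h1.symm, fun m hm => ?_⟩
    exact (h2 m (fix_transfer σ hσ0 hσadd hσcont (fun m : ℤ => ((m, 0) : ℤ × ℤ)) 0 rfl
      h1.symm hm)).symm
  · rintro p q r ⟨h1, h2⟩ ⟨h3, h4⟩
    refine ⟨h1.trans h3, fun m hm => ?_⟩
    exact (h2 m hm).trans (h4 m (fix_transfer σ hσ0 hσadd hσcont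
      (fun m : ℤ => ((m, 0) : ℤ × ℤ)) 0 rfl h1 hm))

lemma rel2_equiv : Equivalence (rel2 σ) := by
  constructor
  · exact fun p => ⟨rfl, fun m _ => rfl⟩
  · rintro p q ⟨h1, h2⟩
    refine ⟨h1.symm, fun m hm => ?_⟩
    exact (h2 m (fix_transfer σ hσ0 hσadd hσcont (fun n : ℤ => ((0, n) : ℤ × ℤ)) 0 rfl
      h1.symm hm)).symm
  · rintro p q r ⟨h1, h2⟩ ⟨h3, h4⟩
    refine ⟨h1.trans h3, fun m hm => ?_⟩
    exact (h2 m hm).trans (h4 m (fix_transfer σ hσ0 hσadd hσcont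
      (fun n : ℤ => ((0, n) : ℤ × ℤ)) 0 rfl h1 hm))

lemma relPhi_equiv : Equivalence (relPhi σ) := by
  constructor
  · exact fun p => ⟨rfl, fun t _ => rfl⟩
  · rintro p q ⟨h1, h2⟩
    refine ⟨h1.symm, fun t ht => ?_⟩
    exact (h2 t (fix_transfer σ hσ0 hσadd hσcont id (0 : ℤ × ℤ) rfl h1.symm ht)).symm
  · rintro p q r ⟨h1, h2⟩ ⟨h3, h4⟩
    refine ⟨h1.trans h3, fun t ht => ?_⟩
    exact (h2 t ht).trans (h4 t (fix_transfer σ hσ0 hσadd hσcont id (0 : ℤ × ℤ) rfl h1 ht))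

lemma char1 (y : WithTop ℤ × WithTop ℤ × Φ) :
    y.1 = ⊤ ↔ ∀ x ∈ closure (Set.range fun t : ℤ × ℤ => act σ t y), x.1 = ⊤ := by
  obtain ⟨y1, y2, φ⟩ := y
  rcases eq_or_ne y1 ⊤ with rfl | h1 <;> rcases eq_or_ne y2 ⊤ with rfl | h2
  · rw [cl_tt]
    exact iff_of_true rfl fun x hx => hx.1
  · obtain ⟨b, rfl⟩ := WithTop.ne_top_iff_exists.mp h2
    rw [cl_tf]
    exact iff_of_true rfl fun x hx => hx.1
  · obtain ⟨a, rfl⟩ := WithTop.ne_top_iff_exists.mp h1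
    rw [cl_ft]
    refine iff_of_false WithTop.coe_ne_top fun hall => WithTop.coe_ne_top
      (hall ((a : WithTop ℤ), (⊤ : WithTop ℤ), φ) ⟨trivial, rfl, subset_closure ⟨0, hσ0 φ⟩⟩)
  · obtain ⟨a, rfl⟩ := WithTop.ne_top_iff_exists.mp h1
    obtain ⟨b, rfl⟩ := WithTop.ne_top_iff_exists.mp h2
    rw [cl_ff]
    exact iff_of_false WithTop.coe_ne_top fun hall => WithTop.coe_ne_top
      (hall ((a : WithTop ℤ), (b : WithTop ℤ), φ) ⟨trivial, trivial, rfl⟩)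

lemma char2 (y : WithTop ℤ × WithTop ℤ × Φ) :
    y.2.1 = ⊤ ↔ ∀ x ∈ closure (Set.range fun t : ℤ × ℤ => act σ t y), x.2.1 = ⊤ := by
  obtain ⟨y1, y2, φ⟩ := y
  rcases eq_or_ne y1 ⊤ with rfl | h1 <;> rcases eq_or_ne y2 ⊤ with rfl | h2
  · rw [cl_tt]
    exact iff_of_true rfl fun x hx => hx.2.1
  · obtain ⟨b, rfl⟩ := WithTop.ne_top_iff_exists.mp h2
    rw [cl_tf]
    refine iff_of_false WithTop.coe_ne_top fun hall => WithTop.coe_ne_top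
      (hall ((⊤ : WithTop ℤ), (b : WithTop ℤ), φ) ⟨rfl, trivial, subset_closure ⟨0, hσ0 φ⟩⟩)
  · obtain ⟨a, rfl⟩ := WithTop.ne_top_iff_exists.mp h1
    rw [cl_ft]
    exact iff_of_true rfl fun x hx => hx.2.1
  · obtain ⟨a, rfl⟩ := WithTop.ne_top_iff_exists.mp h1
    obtain ⟨b, rfl⟩ := WithTop.ne_top_iff_exists.mp h2
    rw [cl_ff]
    exact iff_of_false WithTop.coe_ne_top fun hall => WithTop.coe_ne_top
      (hall ((a : WithTop ℤ), (b : WithTop ℤ), φ) ⟨trivial, trivial, rfl⟩)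


lemma hwd : ∀ p q, relY σ p q → phiMap σ p = phiMap σ q := by
  rintro ⟨⟨y1, y2, φ⟩, z⟩ ⟨⟨y1', y2', ψ⟩, w⟩ ⟨hcl, hch⟩
  have e1 : y1 = ⊤ ↔ y1' = ⊤ := by
    have h := char1 σ hσ0 hσadd hσcont (y1, y2, φ)
    rw [hcl] at h
    exact h.trans (char1 σ hσ0 hσadd hσcont (y1', y2', ψ)).symm
  have e2 : y2 = ⊤ ↔ y2' = ⊤ := by
    have h := char2 σ hσ0 hσadd hσcont (y1, y2, φ)
    rw [hcl] at h
    exact h.trans (char2 σ hσ0 hσadd hσcont (y1', y2', ψ)).symm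
  rcases eq_or_ne y1 ⊤ with rfl | h1 <;> rcases eq_or_ne y2 ⊤ with rfl | h2
  · -- tt
    have h1' : y1' = ⊤ := e1.mp rfl
    have h2' : y2' = ⊤ := e2.mp rfl
    subst h1'; subst h2'
    rw [cl_tt, cl_tt] at hcl
    have hC := prod_prod_inj (Set.mem_singleton ⊤) (Set.mem_singleton ⊤) hcl
    simp only [phiMap, if_pos rfl]
    refine congrArg _ (congrArg _ (congrArg _ (Quot.sound ⟨hC, fun t ht => ?_⟩)))
    exact hch t (by rw [act_tt]; simp [ht])
  · -- tf
    have h1' : y1' = ⊤ := e1.mp rfl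
    have h2' : y2' ≠ ⊤ := fun h => h2 (e2.mpr h)
    subst h1'
    obtain ⟨b, rfl⟩ := WithTop.ne_top_iff_exists.mp h2
    obtain ⟨b', rfl⟩ := WithTop.ne_top_iff_exists.mp h2'
    rw [cl_tf, cl_tf] at hcl
    have hC := prod_prod_inj (Set.mem_singleton ⊤) (Set.mem_univ (⊤ : WithTop ℤ)) hcl
    simp only [phiMap, if_pos rfl, if_neg WithTop.coe_ne_top]
    refine congrArg _ (congrArg _ (Quot.sound ⟨hC, fun m hm => ?_⟩))
    have := hch (m, 0) (by rw [act_tf]; simp [hm])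
    simpa using this
  · -- ft
    have h1' : y1' ≠ ⊤ := fun h => h1 (e1.mpr h)
    have h2' : y2' = ⊤ := e2.mp rfl
    subst h2'
    obtain ⟨a, rfl⟩ := WithTop.ne_top_iff_exists.mp h1
    obtain ⟨a', rfl⟩ := WithTop.ne_top_iff_exists.mp h1'
    rw [cl_ft, cl_ft] at hcl
    have hC := prod_prod_inj (Set.mem_univ (⊤ : WithTop ℤ)) (Set.mem_singleton ⊤) hcl
    simp only [phiMap, if_pos rfl, if_neg WithTop.coe_ne_top]
    refine congrArg _ (congrArg _ (congrArg _ (Quot.sound ⟨hC, fun n hn => ?_⟩)))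
    have := hch (0, n) (by rw [act_ft]; simp [hn])
    simpa using this
  · -- ff
    have h1' : y1' ≠ ⊤ := fun h => h1 (e1.mpr h)
    have h2' : y2' ≠ ⊤ := fun h => h2 (e2.mpr h)
    obtain ⟨a, rfl⟩ := WithTop.ne_top_iff_exists.mp h1
    obtain ⟨b, rfl⟩ := WithTop.ne_top_iff_exists.mp h2
    obtain ⟨a', rfl⟩ := WithTop.ne_top_iff_exists.mp h1'
    obtain ⟨b', rfl⟩ := WithTop.ne_top_iff_exists.mp h2'
    rw [cl_ff, cl_ff] at hcl
    have hC : ({φ} : Set Φ) = {ψ} := prod_prod_inj (Set.mem_univ (⊤ : WithTop ℤ)) (Set.mem_univ (⊤ : WithTop ℤ)) hcl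
    simp only [phiMap, if_neg WithTop.coe_ne_top]
    exact congrArg _ (Set.singleton_eq_singleton_iff.mp hC)

lemma hsame : ∀ p q, phiMap σ p = phiMap σ q → relY σ p q := by
  rintro ⟨⟨y1, y2, φ⟩, z⟩ ⟨⟨y1', y2', ψ⟩, w⟩ h
  rcases eq_or_ne y1 ⊤ with h1 | h1 <;> rcases eq_or_ne y2 ⊤ with h2 | h2 <;>
    rcases eq_or_ne y1' ⊤ with h1' | h1' <;> rcases eq_or_ne y2' ⊤ with h2' | h2' <;>
    simp only [phiMap, h1, h2, h1', h2', if_true, if_false, if_pos, if_neg,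
      Sum.inr.injEq, Sum.inl.injEq, reduceIte, reduceCtorEq] at h
  · -- tt tt
    subst h1; subst h2; subst h1'; subst h2'
    have hr : relPhi σ (φ, z) (ψ, w) :=
      ((relPhi_equiv σ hσ0 hσadd hσcont).eqvGen_iff).mp (Quot.eq.mp h)
    refine ⟨by rw [cl_tt, cl_tt, hr.1], fun t ht => ?_⟩
    exact hr.2 t (stab_tt σ ht)
  · -- tf tf
    subst h1; subst h1'
    obtain ⟨b, rfl⟩ := WithTop.ne_top_iff_exists.mp h2
    obtain ⟨b', rfl⟩ := WithTop.ne_top_iff_exists.mp h2'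
    have hr : rel1 σ (φ, z.1) (ψ, w.1) :=
      ((rel1_equiv σ hσ0 hσadd hσcont).eqvGen_iff).mp (Quot.eq.mp h)
    refine ⟨by rw [cl_tf, cl_tf, hr.1], fun t ht => ?_⟩
    obtain ⟨ht2, htf⟩ := stab_tf σ ht
    have := hr.2 t.1 htf
    rw [ht2]
    simp [this]
  · -- ft ft
    subst h2; subst h2'
    obtain ⟨a, rfl⟩ := WithTop.ne_top_iff_exists.mp h1
    obtain ⟨a', rfl⟩ := WithTop.ne_top_iff_exists.mp h1'
    have hr : rel2 σ (φ, z.2) (ψ, w.2) :=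
      ((rel2_equiv σ hσ0 hσadd hσcont).eqvGen_iff).mp (Quot.eq.mp h)
    refine ⟨by rw [cl_ft, cl_ft, hr.1], fun t ht => ?_⟩
    obtain ⟨ht1, htf⟩ := stab_ft σ ht
    have := hr.2 t.2 htf
    rw [ht1]
    simp [this]
  · -- ff ff
    obtain ⟨a, rfl⟩ := WithTop.ne_top_iff_exists.mp h1
    obtain ⟨b, rfl⟩ := WithTop.ne_top_iff_exists.mp h2
    obtain ⟨a', rfl⟩ := WithTop.ne_top_iff_exists.mp h1'
    obtain ⟨b', rfl⟩ := WithTop.ne_top_iff_exists.mp h2'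
    subst h
    refine ⟨by rw [cl_ff, cl_ff], fun t ht => ?_⟩
    have := stab_ff σ ht
    rw [this]
    simp

end Stmt10Aux

/-- The assignments `[((r,s),φ,γ)] ↦ φ`, `[((∞,r),φ,(z₁,z₂))] ↦ [(φ,z₁)]`,
`[((r,∞),φ,(z₁,z₂))] ↦ [(φ,z₂)]` and `[((∞,∞),φ,γ)] ↦ [(φ,γ)]` are well defined and
combine to a bijection from `(Y × 𝕋²)/∼` onto
`Φ ⊔ (Φ×𝕋)/∼₁ ⊔ (Φ×𝕋)/∼₂ ⊔ (Φ×𝕋²)/∼`. -/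
theorem stmt10 {Φ : Type*} [TopologicalSpace Φ] [T2Space Φ]
    [TopologicalSpace (WithTop ℤ)] [OrderTopology (WithTop ℤ)]
    (σ : ℤ × ℤ → Φ → Φ)
    (hσ0 : ∀ φ : Φ, σ 0 φ = φ)
    (hσadd : ∀ s t : ℤ × ℤ, ∀ φ : Φ, σ (s + t) φ = σ s (σ t φ))
    (hσcont : ∀ t : ℤ × ℤ, Continuous (σ t)) :
    ∃ F : Quot (relY σ) →
        Φ ⊕ (Quot (rel1 σ) ⊕ (Quot (rel2 σ) ⊕ Quot (relPhi σ))),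
      (∀ (r s : ℤ) (φ : Φ) (γ : Circle × Circle),
        F (Quot.mk _ (((r : WithTop ℤ), (s : WithTop ℤ), φ), γ)) = Sum.inl φ) ∧
      (∀ (r : ℤ) (φ : Φ) (z₁ z₂ : Circle),
        F (Quot.mk _ (((⊤ : WithTop ℤ), (r : WithTop ℤ), φ), (z₁, z₂)))
          = Sum.inr (Sum.inl (Quot.mk _ (φ, z₁)))) ∧
      (∀ (r : ℤ) (φ : Φ) (z₁ z₂ : Circle),
        F (Quot.mk _ (((r : WithTop ℤ), (⊤ : WithTop ℤ), φ), (z₁, z₂)))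
          = Sum.inr (Sum.inr (Sum.inl (Quot.mk _ (φ, z₂))))) ∧
      (∀ (φ : Φ) (γ : Circle × Circle),
        F (Quot.mk _ (((⊤ : WithTop ℤ), (⊤ : WithTop ℤ), φ), γ))
          = Sum.inr (Sum.inr (Sum.inr (Quot.mk _ (φ, γ))))) ∧
      Function.Bijective F := by
  classical
  refine ⟨Quot.lift (phiMap σ) (Stmt10Aux.hwd σ hσ0 hσadd hσcont), ?_, ?_, ?_, ?_, ?_, ?_⟩
  · intro r s φ γ
    show phiMap σ (((r : WithTop ℤ), (s : WithTop ℤ), φ), γ) = Sum.inl φ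
    simp [phiMap, WithTop.coe_ne_top]
  · intro r φ z₁ z₂
    show phiMap σ (((⊤ : WithTop ℤ), (r : WithTop ℤ), φ), (z₁, z₂)) = _
    simp [phiMap, WithTop.coe_ne_top]
  · intro r φ z₁ z₂
    show phiMap σ (((r : WithTop ℤ), (⊤ : WithTop ℤ), φ), (z₁, z₂)) = _
    simp [phiMap, WithTop.coe_ne_top]
  · intro φ γ
    show phiMap σ (((⊤ : WithTop ℤ), (⊤ : WithTop ℤ), φ), γ) = _
    simp [phiMap]
  · intro x y h
    obtain ⟨p, rfl⟩ := Quot.exists_rep x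
    obtain ⟨q, rfl⟩ := Quot.exists_rep y
    exact Quot.sound (Stmt10Aux.hsame σ hσ0 hσadd hσcont p q h)
  · rintro (φ | q1 | q2 | q3)
    · refine ⟨Quot.mk _ ((((0 : ℤ) : WithTop ℤ), ((0 : ℤ) : WithTop ℤ), φ), (1, 1)), ?_⟩
      show phiMap σ _ = _
      simp [phiMap, WithTop.coe_ne_top]
    · obtain ⟨⟨φ, z⟩, rfl⟩ := Quot.exists_rep q1
      refine ⟨Quot.mk _ (((⊤ : WithTop ℤ), ((0 : ℤ) : WithTop ℤ), φ), (z, 1)), ?_⟩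
      show phiMap σ _ = _
      simp [phiMap, WithTop.coe_ne_top]
    · obtain ⟨⟨φ, z⟩, rfl⟩ := Quot.exists_rep q2
      refine ⟨Quot.mk _ ((((0 : ℤ) : WithTop ℤ), (⊤ : WithTop ℤ), φ), (1, z)), ?_⟩
      show phiMap σ _ = _
      simp [phiMap, WithTop.coe_ne_top]
    · obtain ⟨⟨φ, γ⟩, rfl⟩ := Quot.exists_rep q3
      refine ⟨Quot.mk _ (((⊤ : WithTop ℤ), (⊤ : WithTop ℤ), φ), γ), ?_⟩
      show phiMap σ _ = _
      simp [phiMap]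
end
end

section
/- Assume Φ is Hausdorff. For every r, s ∈ ℤ and φ ∈ Φ, the closure in Y of the ℤ²-orbit of ((r,s), φ) equals (ℤ∪{∞}) × (ℤ∪{∞}) × {φ}; in particular this orbit is not closed in Y. (This is the key step in the proof that the partial-isometric crossed product A ×^piso_α ℕ² is never CCR when A is separable and abelian.) -/
noncomputable section

/-- For `r, s ∈ ℤ` and `φ ∈ Φ` the closure in `Y` of the `ℤ²`-orbit of
`((r,s), φ)` is `(ℤ∪{∞}) × (ℤ∪{∞}) × {φ}`; in particular this orbit is not closed in `Y`
(the key step in showing that `A ×^piso_α ℕ²` is never CCR for separable abelian `A`). -/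
theorem stmt12 {Φ : Type*} [TopologicalSpace Φ] [T2Space Φ]
    [TopologicalSpace (WithTop ℤ)] [OrderTopology (WithTop ℤ)]
    (σ : ℤ × ℤ → Φ → Φ)
    (hσ0 : ∀ φ : Φ, σ 0 φ = φ)
    (hσadd : ∀ s t : ℤ × ℤ, ∀ φ : Φ, σ (s + t) φ = σ s (σ t φ))
    (hσcont : ∀ t : ℤ × ℤ, Continuous (σ t))
    (r s : ℤ) (φ : Φ) :
    closure (Set.range fun t : ℤ × ℤ => act σ t ((r : WithTop ℤ), (s : WithTop ℤ), φ))
      = {p : WithTop ℤ × WithTop ℤ × Φ | p.2.2 = φ} ∧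
    ¬ IsClosed (Set.range fun t : ℤ × ℤ =>
        act σ t ((r : WithTop ℤ), (s : WithTop ℤ), φ)) := by
  have hf : ∀ t : ℤ × ℤ, act σ t ((r : WithTop ℤ), (s : WithTop ℤ), φ)
      = (((r + t.1 : ℤ) : WithTop ℤ), ((s + t.2 : ℤ) : WithTop ℤ), φ) := by
    intro t
    simp [act, WithTop.coe_ne_top, ← WithTop.coe_add]
  have hrange : (Set.range fun t : ℤ × ℤ => act σ t ((r : WithTop ℤ), (s : WithTop ℤ), φ))
      = (Set.range ((↑) : ℤ → WithTop ℤ)) ×ˢ ((Set.range ((↑) : ℤ → WithTop ℤ)) ×ˢ {φ}) := by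
    ext ⟨a, b, ψ⟩
    simp only [Set.mem_range, Set.mem_prod, Set.mem_singleton_iff]
    constructor
    · rintro ⟨t, ht⟩
      rw [hf] at ht
      injection ht with h1 h2
      injection h2 with h2 h3
      exact ⟨⟨r + t.1, h1⟩, ⟨s + t.2, h2⟩, h3.symm⟩
    · rintro ⟨⟨m, rfl⟩, ⟨n, rfl⟩, rfl⟩
      refine ⟨(m - r, n - s), ?_⟩
      rw [hf]
      simp
  have hd : Dense (Set.range ((↑) : ℤ → WithTop ℤ)) := by
    intro x
    cases x with
    | top =>
      rw [mem_closure_iff_nhds_basis nhds_top_basis]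
      intro a ha
      lift a to ℤ using ha.ne
      exact ⟨((a + 1 : ℤ) : WithTop ℤ), ⟨a + 1, rfl⟩, by
        show (a : WithTop ℤ) < ((a + 1 : ℤ) : WithTop ℤ)
        exact_mod_cast lt_add_one a⟩
    | coe n => exact subset_closure ⟨n, rfl⟩
  have hclos : closure (Set.range fun t : ℤ × ℤ =>
      act σ t ((r : WithTop ℤ), (s : WithTop ℤ), φ))
      = {p : WithTop ℤ × WithTop ℤ × Φ | p.2.2 = φ} := by
    rw [hrange, closure_prod_eq, closure_prod_eq, hd.closure_eq, closure_singleton]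
    ext ⟨a, b, ψ⟩
    simp [eq_comm]
  refine ⟨hclos, fun h => ?_⟩
  have : ((⊤ : WithTop ℤ), (⊤ : WithTop ℤ), φ) ∈ Set.range fun t : ℤ × ℤ =>
      act σ t ((r : WithTop ℤ), (s : WithTop ℤ), φ) := by
    rw [← h.closure_eq, hclos]; rfl
  obtain ⟨t, ht⟩ := this
  have ht' := (hf t).symm.trans ht
  exact WithTop.coe_ne_top (congrArg Prod.fst ht')
end
end
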